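/- arXiv:2502.11474 — 12 statements merged into one kernel-verified Lean document; each statement's English description precedes it below -/
import Mathlib

section
/- Let f(q) = qⁿ + q^p·a_p + q^(p-1)·a_(p-1) + ⋯ + q·a₁ + a₀ with 0 ≤ p ≤ n−1 be a monic quaternion polynomial of degree n with quaternion coefficients, and suppose |a_ν| ≤ M for ν = 0, 1, …, p. Then every zero q of f satisfies |q| ≤ ((1 + M)^(p+1) − 1)^(1/n). -/
open scoped Quaternion

/-- Theorem A: refinement of Cauchy's bound for quaternion polynomials
`f(q) = q^n + q^p a_p + ⋯ + q a₁ + a₀`, `0 ≤ p ≤ n-1`, with `‖a_ν‖ ≤ M`: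
every zero satisfies `‖q‖ ≤ ((1+M)^(p+1) - 1)^(1/n)`. -/
theorem stmt_0 (n p : ℕ) (hpn : p < n) (a : ℕ → ℍ[ℝ]) (M : ℝ) (hM : 0 < M)
    (ha : ∀ ν ≤ p, ‖a ν‖ ≤ M)
    (q : ℍ[ℝ]) (hq : q ^ n + ∑ ν ∈ Finset.range (p + 1), q ^ ν * a ν = 0) :
    ‖q‖ ≤ ((1 + M) ^ (p + 1) - 1) ^ ((n : ℝ)⁻¹) := by
  set r := ‖q‖ with hrdef
  have hr0 : 0 ≤ r := norm_nonneg q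
  -- Step 1: r^n ≤ M * Σ r^ν
  have step1 : r ^ n ≤ M * ∑ ν ∈ Finset.range (p + 1), r ^ ν := by
    have h1 : q ^ n = -(∑ ν ∈ Finset.range (p + 1), q ^ ν * a ν) := by
      rw [eq_neg_iff_add_eq_zero]; exact hq
    calc r ^ n = ‖q ^ n‖ := (norm_pow q n).symm
      _ = ‖∑ ν ∈ Finset.range (p + 1), q ^ ν * a ν‖ := by rw [h1, norm_neg]
      _ ≤ ∑ ν ∈ Finset.range (p + 1), ‖q ^ ν * a ν‖ := norm_sum_le _ _
      _ ≤ ∑ ν ∈ Finset.range (p + 1), r ^ ν * M := by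
          apply Finset.sum_le_sum
          intro ν hν
          rw [norm_mul, norm_pow]
          exact mul_le_mul_of_nonneg_left (ha ν (Finset.mem_range_succ_iff.mp hν))
            (pow_nonneg hr0 _)
      _ = M * ∑ ν ∈ Finset.range (p + 1), r ^ ν := by
          rw [← Finset.sum_mul, mul_comm]
  -- Step 2: r ≤ 1 + M
  have hrM : r ≤ 1 + M := by
    rcases le_or_gt r 1 with h | h
    · linarith
    · have h3 : 0 < r - 1 := by linarith
      have hS : ∑ ν ∈ Finset.range (p + 1), r ^ ν = (r ^ (p + 1) - 1) / (r - 1) :=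
        geom_sum_eq (by linarith) _
      have h2 : r ^ n * (r - 1) ≤ M * (r ^ (p + 1) - 1) := by
        rw [hS, mul_div_assoc'] at step1
        exact (le_div_iff₀ h3).mp step1
      have h4 : r ^ (p + 1) ≤ r ^ n := pow_le_pow_right₀ h.le hpn
      have h5 : 0 < r ^ n := pow_pos (by linarith) n
      nlinarith
  -- Step 3: r^n ≤ (1+M)^(p+1) - 1
  have stepc : r ^ n ≤ (1 + M) ^ (p + 1) - 1 := by
    have hsum : ∑ ν ∈ Finset.range (p + 1), r ^ ν
        ≤ ∑ ν ∈ Finset.range (p + 1), (1 + M) ^ ν :=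
      Finset.sum_le_sum fun ν _ => pow_le_pow_left₀ hr0 hrM ν
    have hgeom : ∑ ν ∈ Finset.range (p + 1), (1 + M) ^ ν
        = ((1 + M) ^ (p + 1) - 1) / M := by
      rw [geom_sum_eq (by linarith)]
      ring_nf
    calc r ^ n ≤ M * ∑ ν ∈ Finset.range (p + 1), r ^ ν := step1
      _ ≤ M * (((1 + M) ^ (p + 1) - 1) / M) := by
          rw [← hgeom]; exact mul_le_mul_of_nonneg_left hsum hM.le
      _ = (1 + M) ^ (p + 1) - 1 := by field_simp
  -- Step 4: conclude via rpow
  have hn : n ≠ 0 := by omega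
  calc r = (r ^ n) ^ ((n : ℝ)⁻¹) := (Real.pow_rpow_inv_natCast hr0 hn).symm
    _ ≤ ((1 + M) ^ (p + 1) - 1) ^ ((n : ℝ)⁻¹) :=
        Real.rpow_le_rpow (pow_nonneg hr0 n) stepc (by positivity)
end

section
/- Let f(q) = qⁿ + q^(n-1)·a_(n-1) + ⋯ + q·a₁ + a₀ be a monic quaternion polynomial of degree n with quaternion coefficients, and suppose |a_ν| ≤ M for ν = 0, 1, …, n−1. Then every zero q of f satisfies |q| ≤ ((1 + M)ⁿ − 1)^(1/n). -/
open scoped Quaternion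

lemma key_bound (n : ℕ) (hn : 1 ≤ n) (r M : ℝ) (hr : 0 ≤ r) (hM : 0 < M)
    (h : r ^ n ≤ M * ∑ ν ∈ Finset.range n, r ^ ν) :
    r ^ n ≤ (1 + M) ^ n - 1 := by
  rcases le_or_gt r 1 with h1 | h1
  · have hsum : ∑ ν ∈ Finset.range n, r ^ ν ≤ (n : ℝ) := by
      calc ∑ ν ∈ Finset.range n, r ^ ν ≤ ∑ ν ∈ Finset.range n, (1 : ℝ) :=
            Finset.sum_le_sum fun i _ => pow_le_one₀ hr h1
        _ = (n : ℝ) := by simp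
    have hb : 1 + (n : ℝ) * M ≤ (1 + M) ^ n := one_add_mul_le_pow (by linarith) n
    have : r ^ n ≤ M * n := le_trans h (by nlinarith)
    nlinarith
  · set x := r ^ n with hxdef
    have hx1 : 1 < x := one_lt_pow₀ h1 (by omega)
    have hgeom : ∑ ν ∈ Finset.range n, r ^ ν = (x - 1) / (r - 1) :=
      geom_sum_eq (ne_of_gt h1) n
    have hr1 : 0 < r - 1 := by linarith
    have h2 : x * (r - 1) ≤ M * (x - 1) := by
      rw [hgeom, mul_div_assoc'] at h
      exact (le_div_iff₀ hr1).mp h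
    have hx0 : 0 < x := by linarith
    set c := (x - 1) / x with hcdef
    have hc0 : 0 < c := div_pos (by linarith) hx0
    have hc1 : c < 1 := (div_lt_one hx0).mpr (by linarith)
    have hcx : c * x = x - 1 := div_mul_cancel₀ _ (ne_of_gt hx0)
    have hrc : r ≤ 1 + M * c := by nlinarith [h2, hcx, hx0]
    have h3 : x ≤ (1 + M * c) ^ n := by
      rw [hxdef]
      exact pow_le_pow_left₀ hr hrc n
    have hconv := (convexOn_pow n).2 (Set.mem_Ici.mpr (by linarith : (0:ℝ) ≤ 1 + M))
      (Set.mem_Ici.mpr (by norm_num : (0:ℝ) ≤ 1)) (le_of_lt hc0)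
      (by linarith : (0:ℝ) ≤ 1 - c) (by ring)
    simp only [smul_eq_mul, one_pow, mul_one] at hconv
    have heq : c * (1 + M) + (1 - c) = 1 + M * c := by ring
    rw [heq] at hconv
    have h4 : x ≤ c * (1 + M) ^ n + (1 - c) := le_trans h3 hconv
    nlinarith [h4, hcx, hx0]

/-- Corollary 1: `f(q) = q^n + q^{n-1} a_{n-1} + ⋯ + a₀` with `‖a_ν‖ ≤ M`:
every zero satisfies `‖q‖ ≤ ((1+M)^n - 1)^(1/n)`. -/
theorem stmt_1 (n : ℕ) (hn : 1 ≤ n) (a : ℕ → ℍ[ℝ]) (M : ℝ) (hM : 0 < M)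
    (ha : ∀ ν < n, ‖a ν‖ ≤ M)
    (q : ℍ[ℝ]) (hq : q ^ n + ∑ ν ∈ Finset.range n, q ^ ν * a ν = 0) :
    ‖q‖ ≤ ((1 + M) ^ n - 1) ^ ((n : ℝ)⁻¹) := by
  set r := ‖q‖ with hrdef
  have hr : 0 ≤ r := norm_nonneg q
  have hqn : q ^ n = -∑ ν ∈ Finset.range n, q ^ ν * a ν := eq_neg_of_add_eq_zero_left hq
  have hnorm : r ^ n ≤ M * ∑ ν ∈ Finset.range n, r ^ ν := by
    calc r ^ n = ‖q ^ n‖ := (norm_pow q n).symm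
      _ = ‖∑ ν ∈ Finset.range n, q ^ ν * a ν‖ := by rw [hqn, norm_neg]
      _ ≤ ∑ ν ∈ Finset.range n, ‖q ^ ν * a ν‖ := norm_sum_le _ _
      _ ≤ ∑ ν ∈ Finset.range n, r ^ ν * M := by
          apply Finset.sum_le_sum
          intro i hi
          rw [norm_mul, norm_pow]
          exact mul_le_mul_of_nonneg_left (ha i (Finset.mem_range.mp hi))
            (pow_nonneg hr i)
      _ = M * ∑ ν ∈ Finset.range n, r ^ ν := by rw [Finset.mul_sum]; congr 1; ext; ring
  have hkey : r ^ n ≤ (1 + M) ^ n - 1 := key_bound n hn r M hr hM hnorm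
  have hne : n ≠ 0 := by omega
  calc r = (r ^ n) ^ ((n : ℝ)⁻¹) := (Real.pow_rpow_inv_natCast hr hne).symm
    _ ≤ ((1 + M) ^ n - 1) ^ ((n : ℝ)⁻¹) :=
        Real.rpow_le_rpow (pow_nonneg hr n) hkey (by positivity)
end

section
/- Let f(q) = qⁿ + q^p·a_p + ⋯ + q·a₁ + a₀ with 0 ≤ p ≤ n−1 be a monic quaternion polynomial of degree n with quaternion coefficients satisfying |a_ν| ≤ M for ν = 0, …, p. Then every zero q of f satisfies |q| ≤ (1 + M)^((p+1)/n). -/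
open scoped Quaternion

/-- Corollary 2: every zero of `f(q) = q^n + q^p a_p + ⋯ + a₀` with `‖a_ν‖ ≤ M`
satisfies `‖q‖ ≤ (1+M)^((p+1)/n)`. -/
theorem stmt_2 (n p : ℕ) (hpn : p < n) (a : ℕ → ℍ[ℝ]) (M : ℝ) (hM : 0 < M)
    (ha : ∀ ν ≤ p, ‖a ν‖ ≤ M)
    (q : ℍ[ℝ]) (hq : q ^ n + ∑ ν ∈ Finset.range (p + 1), q ^ ν * a ν = 0) :
    ‖q‖ ≤ (1 + M) ^ (((p : ℝ) + 1) / n) := by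
  set r := ‖q‖ with hrdef
  have hr0 : 0 ≤ r := norm_nonneg q
  have key : r ^ n ≤ (∑ ν ∈ Finset.range (p + 1), r ^ ν) * M := by
    have h1 : q ^ n = -∑ ν ∈ Finset.range (p + 1), q ^ ν * a ν := by
      exact eq_neg_of_add_eq_zero_left hq
    calc r ^ n = ‖q ^ n‖ := (norm_pow q n).symm
      _ = ‖∑ ν ∈ Finset.range (p + 1), q ^ ν * a ν‖ := by rw [h1, norm_neg]
      _ ≤ ∑ ν ∈ Finset.range (p + 1), ‖q ^ ν * a ν‖ := norm_sum_le _ _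
      _ ≤ ∑ ν ∈ Finset.range (p + 1), r ^ ν * M := by
          refine Finset.sum_le_sum fun ν hν => ?_
          rw [norm_mul, norm_pow]
          exact mul_le_mul_of_nonneg_left
            (ha ν (by simpa [Nat.lt_succ_iff] using Finset.mem_range.mp hν))
            (pow_nonneg hr0 ν)
      _ = (∑ ν ∈ Finset.range (p + 1), r ^ ν) * M := by rw [Finset.sum_mul]
  have hgeo : (∑ ν ∈ Finset.range (p + 1), r ^ ν) * (r - 1) = r ^ (p + 1) - 1 :=
    geom_sum_mul r (p + 1)
  have hrM : r ≤ 1 + M := by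
    by_contra h
    push_neg at h
    have hr1 : 1 < r := by linarith
    have hpow : r ^ (p + 1) ≤ r ^ n := pow_le_pow_right₀ hr1.le hpn
    have hrn : 0 < r ^ n := pow_pos (by linarith) n
    have h2 : r ^ n * (r - 1) ≤ (r ^ (p + 1) - 1) * M := by
      calc r ^ n * (r - 1) ≤ ((∑ ν ∈ Finset.range (p + 1), r ^ ν) * M) * (r - 1) :=
            mul_le_mul_of_nonneg_right key (by linarith)
        _ = (r ^ (p + 1) - 1) * M := by rw [mul_right_comm, hgeo]
    nlinarith [mul_pos hrn hM, mul_le_mul_of_nonneg_right hpow hM.le]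
  have hsum : (∑ ν ∈ Finset.range (p + 1), r ^ ν) * M ≤ (1 + M) ^ (p + 1) - 1 := by
    have h3 : (∑ ν ∈ Finset.range (p + 1), (1 + M) ^ ν) * M = (1 + M) ^ (p + 1) - 1 := by
      have := geom_sum_mul (1 + M) (p + 1)
      simpa using this
    calc (∑ ν ∈ Finset.range (p + 1), r ^ ν) * M
        ≤ (∑ ν ∈ Finset.range (p + 1), (1 + M) ^ ν) * M := by
          refine mul_le_mul_of_nonneg_right (Finset.sum_le_sum fun ν _ => ?_) hM.le
          exact pow_le_pow_left₀ hr0 hrM ν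
      _ = (1 + M) ^ (p + 1) - 1 := h3
  have hfin : r ^ n ≤ (1 + M) ^ (p + 1) := by linarith
  have hn : (0:ℝ) < n := by exact_mod_cast Nat.pos_of_ne_zero (by omega)
  have h1M : (0:ℝ) ≤ 1 + M := by linarith
  have hRHS : ((1 + M) ^ (((p : ℝ) + 1) / n)) ^ n = (1 + M) ^ (p + 1) := by
    rw [← Real.rpow_natCast ((1 + M) ^ (((p : ℝ) + 1) / n)) n, ← Real.rpow_mul h1M]
    rw [div_mul_cancel₀ _ (ne_of_gt hn)]
    rw [show ((p : ℝ) + 1) = ((p + 1 : ℕ) : ℝ) by push_cast; ring, Real.rpow_natCast]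
  have hx : r ^ n ≤ ((1 + M) ^ (((p : ℝ) + 1) / n)) ^ n := by rw [hRHS]; exact hfin
  exact le_of_pow_le_pow_left₀ (by omega : n ≠ 0) (Real.rpow_nonneg h1M _) hx
end

section
/- Let f(q) = qⁿ + q^p·a_p + ⋯ + q·a₁ + a₀ with 0 ≤ p ≤ n−1 be a monic quaternion polynomial of degree n whose coefficients satisfy |a_j| ≤ 1 for j = 0, 1, …, p. Then every zero q of f satisfies |q| ≤ 2^((p+1)/n). -/
open scoped Quaternion

/-- Corollary 3: if `‖a_j‖ ≤ 1` for `j = 0,…,p` then every zero of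
`f(q) = q^n + q^p a_p + ⋯ + a₀` satisfies `‖q‖ ≤ 2^((p+1)/n)`. -/
theorem stmt_3 (n p : ℕ) (hpn : p < n) (a : ℕ → ℍ[ℝ])
    (ha : ∀ j ≤ p, ‖a j‖ ≤ 1)
    (q : ℍ[ℝ]) (hq : q ^ n + ∑ ν ∈ Finset.range (p + 1), q ^ ν * a ν = 0) :
    ‖q‖ ≤ (2 : ℝ) ^ (((p : ℝ) + 1) / n) := by
  have hn : 0 < n := lt_of_le_of_lt (Nat.zero_le _) hpn
  set r : ℝ := ‖q‖ with hr
  have hr0 : 0 ≤ r := norm_nonneg _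
  -- key inequality
  have hkey : r ^ n ≤ ∑ ν ∈ Finset.range (p + 1), r ^ ν := by
    have h1 : q ^ n = -∑ ν ∈ Finset.range (p + 1), q ^ ν * a ν := by
      exact eq_neg_of_add_eq_zero_left hq
    calc r ^ n = ‖q ^ n‖ := (norm_pow q n).symm
      _ = ‖∑ ν ∈ Finset.range (p + 1), q ^ ν * a ν‖ := by rw [h1, norm_neg]
      _ ≤ ∑ ν ∈ Finset.range (p + 1), ‖q ^ ν * a ν‖ := norm_sum_le _ _
      _ ≤ ∑ ν ∈ Finset.range (p + 1), r ^ ν := by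
          refine Finset.sum_le_sum fun ν hν => ?_
          rw [norm_mul, norm_pow]
          have := ha ν (Nat.lt_succ_iff.mp (Finset.mem_range.mp hν))
          calc r ^ ν * ‖a ν‖ ≤ r ^ ν * 1 := by
                exact mul_le_mul_of_nonneg_left this (pow_nonneg hr0 ν)
            _ = r ^ ν := mul_one _
  -- show r ^ n ≤ 2 ^ (p+1)
  have hmain : r ^ n ≤ (2 : ℝ) ^ (p + 1) := by
    rcases le_or_gt r 1 with h1 | h1
    · calc r ^ n ≤ 1 ^ n := pow_le_pow_left₀ hr0 h1 n
        _ = 1 := one_pow n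
        _ ≤ (2 : ℝ) ^ (p + 1) := one_le_pow₀ (by norm_num)
    · -- first show r < 2
      have hr2 : r < 2 := by
        by_contra h
        push_neg at h
        have hgs : (∑ ν ∈ Finset.range (p + 1), r ^ ν) * (r - 1) = r ^ (p + 1) - 1 :=
          geom_sum_mul r (p + 1)
        have hle : r ^ n * (r - 1) ≤ r ^ (p + 1) - 1 := by
          rw [← hgs]
          exact mul_le_mul_of_nonneg_right hkey (by linarith)
        have hpow : r ^ (p + 1) ≤ r ^ n :=
          pow_le_pow_right₀ (le_of_lt h1) hpn
        have hrn : (1 : ℝ) ≤ r ^ n := one_le_pow₀ (le_of_lt h1)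
        nlinarith [hle, hpow, hrn]
      calc r ^ n ≤ ∑ ν ∈ Finset.range (p + 1), r ^ ν := hkey
        _ ≤ ∑ ν ∈ Finset.range (p + 1), (2 : ℝ) ^ ν :=
            Finset.sum_le_sum fun ν _ => pow_le_pow_left₀ hr0 hr2.le ν
        _ = (2 : ℝ) ^ (p + 1) - 1 := by
            have := geom_sum_mul (2 : ℝ) (p + 1)
            linarith
        _ ≤ (2 : ℝ) ^ (p + 1) := by linarith
  -- conclude via rpow
  have h2 : (0 : ℝ) ≤ 2 := by norm_num
  have := Real.rpow_le_rpow (by positivity) hmain (le_of_lt (by positivity : (0:ℝ) < 1 / n))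
  rw [← Real.rpow_natCast r n, ← Real.rpow_natCast (2:ℝ) (p+1),
    ← Real.rpow_mul hr0, ← Real.rpow_mul h2] at this
  have hne : (n : ℝ) ≠ 0 := Nat.cast_ne_zero.mpr hn.ne'
  rw [mul_one_div, div_self hne, Real.rpow_one] at this
  convert this using 2
  push_cast
  ring
end

section
/- Let f(q) = qⁿ + q^p·a_p + ⋯ + q·a₁ + a₀ with 0 ≤ p ≤ n−1 be a monic quaternion polynomial of degree n whose coefficients satisfy |a_j| ≤ 1 for j = 0, 1, …, p. Then every zero q of f satisfies |q| ≤ (2ⁿ − 1)^(1/n). -/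
open scoped Quaternion

lemma aux_bern (n : ℕ) (x : ℝ) (hx0 : 0 ≤ x) (hx1 : x ≤ 1) :
    (1 - x) ^ n * (1 + n * x) ≤ 1 := by
  have h1 : (1 : ℝ) + n * x ≤ (1 + x) ^ n :=
    one_add_mul_le_pow (by linarith : (-2:ℝ) ≤ x) n
  calc (1 - x) ^ n * (1 + n * x) ≤ (1 - x) ^ n * (1 + x) ^ n :=
        mul_le_mul_of_nonneg_left h1 (pow_nonneg (by linarith) n)
    _ = ((1 - x) * (1 + x)) ^ n := (mul_pow _ _ _).symm
    _ = (1 - x ^ 2) ^ n := by ring_nf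
    _ ≤ 1 := pow_le_one₀ (by nlinarith) (by nlinarith)

lemma aux_main (n : ℕ) (hn : 2 ≤ n) (r : ℝ) (hr : 1 < r)
    (hψ : r ^ n * r + 1 ≤ 2 * r ^ n) : r ^ n ≤ 2 ^ n - 1 := by
  by_contra h
  push_neg at h
  set t := r ^ n with ht
  have h2n : (4:ℝ) ≤ 2 ^ n := by
    calc (4:ℝ) = 2 ^ 2 := by norm_num
      _ ≤ 2 ^ n := pow_le_pow_right₀ one_le_two hn
  have ht3 : (3:ℝ) < t := by linarith
  have htpos : (0:ℝ) < t := by linarith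
  have hrle : r ≤ 2 - 1 / t := by
    have hq : t * (2 - 1 / t) = 2 * t - 1 := by field_simp
    have h3 : t * r ≤ t * (2 - 1 / t) := by rw [hq]; linarith
    exact le_of_mul_le_mul_left h3 htpos
  set x := 1 / (2 * t) with hx
  have hx0 : 0 < x := by positivity
  have hx1 : x ≤ 1 := by
    rw [hx, div_le_one (by linarith)]; linarith
  have h4 : t ≤ (2 * (1 - x)) ^ n := by
    have : (2 : ℝ) - 1 / t = 2 * (1 - x) := by rw [hx]; field_simp
    rw [← this]
    calc t = r ^ n := ht
      _ ≤ (2 - 1 / t) ^ n := pow_le_pow_left₀ (by linarith) hrle n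
  have h5 : t * (1 + n * x) ≤ 2 ^ n := by
    calc t * (1 + n * x) ≤ (2 * (1 - x)) ^ n * (1 + n * x) := by
          apply mul_le_mul_of_nonneg_right h4
          positivity
      _ = 2 ^ n * ((1 - x) ^ n * (1 + n * x)) := by rw [mul_pow]; ring
      _ ≤ 2 ^ n * 1 := by
          apply mul_le_mul_of_nonneg_left (aux_bern n x hx0.le hx1)
          positivity
      _ = 2 ^ n := mul_one _
  have h6 : t * (1 + n * x) = t + n / 2 := by
    rw [hx]; field_simp
  rw [h6] at h5
  have hn2 : (1:ℝ) ≤ (n:ℝ) / 2 := by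
    have : (2:ℝ) ≤ n := by exact_mod_cast hn
    linarith
  linarith

/-- Corollary 4: if `‖a_j‖ ≤ 1` for `j = 0,…,p` then every zero of
`f(q) = q^n + q^p a_p + ⋯ + a₀` satisfies `‖q‖ ≤ (2^n - 1)^(1/n)`. -/
theorem stmt_4 (n p : ℕ) (hpn : p < n) (a : ℕ → ℍ[ℝ])
    (ha : ∀ j ≤ p, ‖a j‖ ≤ 1)
    (q : ℍ[ℝ]) (hq : q ^ n + ∑ ν ∈ Finset.range (p + 1), q ^ ν * a ν = 0) :
    ‖q‖ ≤ ((2 : ℝ) ^ n - 1) ^ ((n : ℝ)⁻¹) := by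
  have hn0 : n ≠ 0 := by omega
  set r := ‖q‖ with hr
  have hr0 : 0 ≤ r := norm_nonneg q
  have h2n : (2:ℝ) ≤ 2 ^ n := by
    calc (2:ℝ) = 2 ^ 1 := by norm_num
      _ ≤ 2 ^ n := pow_le_pow_right₀ one_le_two (by omega)
  have key : r ^ n ≤ ∑ ν ∈ Finset.range n, r ^ ν := by
    have h1 : q ^ n = -∑ ν ∈ Finset.range (p+1), q ^ ν * a ν := by
      exact eq_neg_of_add_eq_zero_left hq
    have h2 : r ^ n = ‖∑ ν ∈ Finset.range (p+1), q ^ ν * a ν‖ := by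
      rw [hr, ← norm_pow, h1, norm_neg]
    rw [h2]
    calc ‖∑ ν ∈ Finset.range (p+1), q ^ ν * a ν‖
        ≤ ∑ ν ∈ Finset.range (p+1), ‖q ^ ν * a ν‖ := norm_sum_le _ _
      _ ≤ ∑ ν ∈ Finset.range (p+1), r ^ ν := by
          apply Finset.sum_le_sum
          intro ν hν
          rw [norm_mul, norm_pow]
          calc ‖q‖ ^ ν * ‖a ν‖ ≤ ‖q‖ ^ ν * 1 :=
                mul_le_mul_of_nonneg_left (ha ν (Finset.mem_range_succ_iff.mp hν))
                  (pow_nonneg hr0 ν)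
            _ = r ^ ν := by rw [mul_one]
      _ ≤ ∑ ν ∈ Finset.range n, r ^ ν := by
          apply Finset.sum_le_sum_of_subset_of_nonneg
          · exact Finset.range_subset_range.mpr (by omega)
          · intros i _ _; positivity
  rcases le_or_gt r 1 with h1 | h1
  · calc r ≤ 1 := h1
      _ ≤ ((2:ℝ)^n - 1) ^ ((n:ℝ)⁻¹) := by
          apply Real.one_le_rpow (by linarith) (by positivity)
  · have hn2 : 2 ≤ n := by
      by_contra hc
      have hne : n = 1 := by omega
      subst hne
      simp at key
      linarith
    have hψ : r ^ n * r + 1 ≤ 2 * r ^ n := by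
      have hg : (∑ ν ∈ Finset.range n, r ^ ν) * (r - 1) = r ^ n - 1 := geom_sum_mul r n
      nlinarith [mul_le_mul_of_nonneg_right key (by linarith : (0:ℝ) ≤ r - 1)]
    have hfin : r ^ n ≤ 2 ^ n - 1 := aux_main n hn2 r h1 hψ
    calc r = (r ^ n) ^ ((n:ℝ)⁻¹) := (Real.pow_rpow_inv_natCast hr0 hn0).symm
      _ ≤ ((2:ℝ)^n - 1) ^ ((n:ℝ)⁻¹) := Real.rpow_le_rpow (by positivity) hfin (by positivity)
end

section
/- Let p(q) = qⁿ·a_n + q^(n-1)·a_(n-1) + ⋯ + q·a₁ + a₀ be a polynomial of degree n in a quaternionic variable q whose coefficients are real numbers satisfying 0 ≤ a₀ ≤ a₁ ≤ ⋯ ≤ a_n with a_n > 0. Then every zero q of p satisfies |q| ≤ 1. -/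
open scoped Quaternion

/-- Eneström–Kakeya theorem for quaternion polynomials with real coefficients
`0 ≤ a₀ ≤ a₁ ⋯ ≤ a_n`, `a_n > 0`: every zero lies in `‖q‖ ≤ 1`. -/
theorem stmt_7 (n : ℕ) (a : ℕ → ℝ) (h0 : 0 ≤ a 0)
    (hmono : ∀ j < n, a j ≤ a (j + 1)) (han : 0 < a n)
    (q : ℍ[ℝ])
    (hq : ∑ j ∈ Finset.range (n + 1), q ^ j * (a j : ℍ[ℝ]) = 0) :
    ‖q‖ ≤ 1 := by
  by_contra h
  push_neg at h
  have hr : 1 < ‖q‖ := h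
  have hrn : (1:ℝ) ≤ ‖q‖ ^ n := by
    calc (1:ℝ) = 1 ^ n := (one_pow n).symm
      _ ≤ ‖q‖ ^ n := pow_le_pow_left₀ zero_le_one hr.le n
  -- split off first term
  have h1 : (a 0 : ℍ[ℝ]) + ∑ j ∈ Finset.range n, q ^ (j+1) * ((a (j+1) : ℝ) : ℍ[ℝ]) = 0 := by
    rw [Finset.sum_range_succ'] at hq
    simpa [add_comm] using hq
  -- multiply by q and split off last term
  have h2 : ∑ j ∈ Finset.range n, q ^ (j+1) * ((a j : ℝ) : ℍ[ℝ]) + q ^ (n+1) * ((a n : ℝ) : ℍ[ℝ]) = 0 := by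
    have := congrArg (fun x => q * x) hq
    simp only [Finset.mul_sum, ← mul_assoc, ← pow_succ', mul_zero] at this
    rwa [Finset.sum_range_succ] at this
  have e1 : ∑ j ∈ Finset.range n, q ^ (j+1) * ((a (j+1) : ℝ) : ℍ[ℝ]) = -(a 0 : ℍ[ℝ]) :=
    eq_neg_of_add_eq_zero_right h1
  have e2 : ∑ j ∈ Finset.range n, q ^ (j+1) * ((a j : ℝ) : ℍ[ℝ]) = -(q ^ (n+1) * ((a n : ℝ) : ℍ[ℝ])) :=
    eq_neg_of_add_eq_zero_left h2
  have key : q ^ (n+1) * ((a n : ℝ) : ℍ[ℝ])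
      = (a 0 : ℍ[ℝ]) + ∑ j ∈ Finset.range n, q ^ (j+1) * (((a (j+1) - a j : ℝ)) : ℍ[ℝ]) := by
    have hsum : ∑ j ∈ Finset.range n, q ^ (j+1) * (((a (j+1) - a j : ℝ)) : ℍ[ℝ])
        = ∑ j ∈ Finset.range n, q ^ (j+1) * ((a (j+1) : ℝ) : ℍ[ℝ])
          - ∑ j ∈ Finset.range n, q ^ (j+1) * ((a j : ℝ) : ℍ[ℝ]) := by
      rw [← Finset.sum_sub_distrib]
      refine Finset.sum_congr rfl fun j _ => ?_
      push_cast
      rw [mul_sub]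
    rw [hsum, e1, e2]
    abel
  have hnormcoe : ∀ b : ℝ, 0 ≤ b → ‖((b : ℝ) : ℍ[ℝ])‖ = b := by
    intro b hb
    rw [Quaternion.norm_coe, Real.norm_of_nonneg hb]
  have hbound : ‖q‖ ^ (n+1) * a n ≤ ‖q‖ ^ n * a n := by
    calc ‖q‖ ^ (n+1) * a n = ‖q ^ (n+1) * ((a n : ℝ) : ℍ[ℝ])‖ := by
          rw [norm_mul, norm_pow, hnormcoe _ han.le]
      _ = ‖(a 0 : ℍ[ℝ]) + ∑ j ∈ Finset.range n, q ^ (j+1) * (((a (j+1) - a j : ℝ)) : ℍ[ℝ])‖ := by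
          rw [key]
      _ ≤ ‖((a 0 : ℝ) : ℍ[ℝ])‖ + ∑ j ∈ Finset.range n, ‖q ^ (j+1) * (((a (j+1) - a j : ℝ)) : ℍ[ℝ])‖ :=
          le_trans (norm_add_le _ _) (by gcongr; exact norm_sum_le _ _)
      _ = a 0 + ∑ j ∈ Finset.range n, ‖q‖ ^ (j+1) * (a (j+1) - a j) := by
          rw [hnormcoe _ h0]
          congr 1
          refine Finset.sum_congr rfl fun j hj => ?_
          rw [norm_mul, norm_pow, hnormcoe _ (sub_nonneg.2 (hmono j (Finset.mem_range.1 hj)))]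
      _ ≤ ‖q‖ ^ n * a 0 + ∑ j ∈ Finset.range n, ‖q‖ ^ n * (a (j+1) - a j) := by
          refine add_le_add (le_mul_of_one_le_left h0 hrn) (Finset.sum_le_sum fun j hj => ?_)
          exact mul_le_mul_of_nonneg_right
            (pow_le_pow_right₀ (le_of_lt hr) (Finset.mem_range.1 hj))
            (sub_nonneg.2 (hmono j (Finset.mem_range.1 hj)))
      _ = ‖q‖ ^ n * (a 0 + (a n - a 0)) := by
          rw [← Finset.mul_sum, Finset.sum_range_sub, mul_add]
      _ = ‖q‖ ^ n * a n := by ring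
  have hqn : (0:ℝ) < ‖q‖ ^ n := lt_of_lt_of_le one_pos hrn
  have : ‖q‖ ^ (n+1) ≤ ‖q‖ ^ n := le_of_mul_le_mul_right (by linarith) han
  have : ‖q‖ ≤ 1 := by
    rw [pow_succ] at this
    nlinarith
  linarith
end

section
/- Let A = (a_{μν}) be an n × n matrix with quaternion entries, and let λ ∈ ℍ be a left eigenvalue of A, i.e., Ax = λx for some nonzero vector x ∈ ℍⁿ. Then there exists an index μ with |λ − a_{μμ}| ≤ Σ_{ν ≠ μ} |a_{μν}|. -/
open scoped Quaternion

/-- Geršgorin's theorem for left eigenvalues of quaternion matrices: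
if `A x = λ x` for some `x ≠ 0`, then some `μ` satisfies
`‖λ - A μ μ‖ ≤ ∑_{ν ≠ μ} ‖A μ ν‖`. -/
theorem stmt_8 (n : ℕ) (A : Matrix (Fin n) (Fin n) ℍ[ℝ]) (lam : ℍ[ℝ])
    (x : Fin n → ℍ[ℝ]) (hx : x ≠ 0)
    (heig : A.mulVec x = fun μ => lam * x μ) :
    ∃ μ, ‖lam - A μ μ‖ ≤ ∑ ν ∈ Finset.univ.erase μ, ‖A μ ν‖ := by
  have hn : 0 < n := by
    rcases Nat.eq_zero_or_pos n with h | h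
    · exact absurd (funext fun i => absurd i.2 (by omega)) hx
    · exact h
  -- choose μ maximizing ‖x μ‖
  obtain ⟨μ, -, hμ⟩ := Finset.exists_max_image (Finset.univ : Finset (Fin n))
    (fun i => ‖x i‖) (Finset.univ_nonempty_iff.mpr ⟨⟨0, hn⟩⟩)
  have hxμ : x μ ≠ 0 := by
    intro h
    apply hx
    funext i
    have := hμ i (Finset.mem_univ i)
    rw [h, norm_zero] at this
    exact norm_le_zero_iff.mp this
  have hxμpos : 0 < ‖x μ‖ := norm_pos_iff.mpr hxμ
  refine ⟨μ, ?_⟩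
  have h1 : (lam - A μ μ) * x μ = ∑ ν ∈ Finset.univ.erase μ, A μ ν * x ν := by
    have h2 : lam * x μ = ∑ ν, A μ ν * x ν := by
      have := congrFun heig μ
      simpa [Matrix.mulVec, dotProduct] using this.symm
    rw [sub_mul, h2, ← Finset.add_sum_erase _ _ (Finset.mem_univ μ)]
    abel
  have h3 : ‖lam - A μ μ‖ * ‖x μ‖ ≤ (∑ ν ∈ Finset.univ.erase μ, ‖A μ ν‖) * ‖x μ‖ := by
    calc ‖lam - A μ μ‖ * ‖x μ‖ = ‖(lam - A μ μ) * x μ‖ := (norm_mul _ _).symm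
    _ = ‖∑ ν ∈ Finset.univ.erase μ, A μ ν * x ν‖ := by rw [h1]
    _ ≤ ∑ ν ∈ Finset.univ.erase μ, ‖A μ ν * x ν‖ := norm_sum_le _ _
    _ ≤ ∑ ν ∈ Finset.univ.erase μ, ‖A μ ν‖ * ‖x μ‖ := by
        refine Finset.sum_le_sum fun ν _ => ?_
        rw [norm_mul]
        exact mul_le_mul_of_nonneg_left (hμ ν (Finset.mem_univ ν)) (norm_nonneg _)
    _ = (∑ ν ∈ Finset.univ.erase μ, ‖A μ ν‖) * ‖x μ‖ := (Finset.sum_mul _ _ _).symm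
  exact le_of_mul_le_mul_right h3 hxμpos
end

section
/- Let P(q) be a monic quaternion polynomial of degree n with companion matrix C_P, and let D = diag(d₁, …, d_n) where d₁, …, d_n are positive real numbers. Then λ ∈ ℍ is a left eigenvalue of D⁻¹ C_P D if and only if λ is a zero of P. -/
set_option maxHeartbeats 1000000


open scoped Quaternion

/-- The companion matrix of the monic quaternion polynomial
`P(q) = q^n + q^{n-1} a₁ + ⋯ + q a_{n-1} + a_n`: subdiagonal entries are `1`
and the last column is `(-a_n, -a_{n-1}, …, -a₁)ᵀ`. -/
noncomputable def companionMatrix (n : ℕ) (a : ℕ → ℍ[ℝ]) : Matrix (Fin n) (Fin n) ℍ[ℝ] :=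
  fun i j =>
    if (i : ℕ) = (j : ℕ) + 1 then 1
    else if (j : ℕ) = n - 1 then -a (n - (i : ℕ)) else 0

/-- Partial horner-type values of the polynomial `P`. -/
noncomputable def pval (a : ℕ → ℍ[ℝ]) (lam : ℍ[ℝ]) (k : ℕ) : ℍ[ℝ] :=
  lam ^ k + ∑ ν ∈ Finset.Icc 1 k, lam ^ (k - ν) * a ν

lemma pval_zero (a : ℕ → ℍ[ℝ]) (lam : ℍ[ℝ]) : pval a lam 0 = 1 := by
  simp [pval]

lemma pval_succ (a : ℕ → ℍ[ℝ]) (lam : ℍ[ℝ]) (k : ℕ) :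
    pval a lam (k + 1) = lam * pval a lam k + a (k + 1) := by
  unfold pval
  rw [Finset.sum_Icc_succ_top (by omega)]
  rw [mul_add, Finset.mul_sum, pow_succ]
  have h1 : ∀ ν ∈ Finset.Icc 1 k, lam * (lam ^ (k - ν) * a ν) = lam ^ (k + 1 - ν) * a ν := by
    intro ν hν
    simp only [Finset.mem_Icc] at hν
    rw [← mul_assoc, ← pow_succ', show k - ν + 1 = k + 1 - ν by omega]
  rw [Finset.sum_congr rfl h1]
  rw [← pow_succ, pow_succ']
  simp only [Nat.sub_self, pow_zero, one_mul]
  abel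

lemma comp_mulVec (n : ℕ) (hn : 1 ≤ n) (a : ℕ → ℍ[ℝ]) (x : Fin n → ℍ[ℝ]) (i : Fin n) :
    (companionMatrix n a).mulVec x i =
      (if h : 1 ≤ (i : ℕ) then x ⟨(i : ℕ) - 1, by omega⟩ else 0)
        + -a (n - (i : ℕ)) * x ⟨n - 1, by omega⟩ := by
  have hi := i.isLt
  rw [Matrix.mulVec, dotProduct]
  have hsplit : ∀ j : Fin n, companionMatrix n a i j * x j =
      (if (i : ℕ) = (j : ℕ) + 1 then x j else 0)
        + (if (j : ℕ) = n - 1 then -a (n - (i : ℕ)) * x j else 0) := by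
    intro j
    have hj := j.isLt
    unfold companionMatrix
    by_cases h1 : (i : ℕ) = (j : ℕ) + 1
    · have h2 : (j : ℕ) ≠ n - 1 := by omega
      simp [h1, h2]
    · by_cases h2 : (j : ℕ) = n - 1
      · have h3 : (i : ℕ) ≠ n - 1 + 1 := by omega
        simp [h1, h2, h3]
      · simp [h1, h2]
  rw [Finset.sum_congr rfl fun j _ => hsplit j, Finset.sum_add_distrib]
  congr 1
  · split_ifs with h
    · rw [Finset.sum_eq_single (⟨(i : ℕ) - 1, by omega⟩ : Fin n)]
      · rw [if_pos]
        simp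
        omega
      · intro j _ hj
        rw [if_neg]
        intro hc
        exact hj (Fin.ext (by simp; omega))
      · simp
    · apply Finset.sum_eq_zero
      intro j _
      rw [if_neg]
      omega
  · rw [Finset.sum_eq_single (⟨n - 1, by omega⟩ : Fin n)]
    · rw [if_pos (by simp)]
    · intro j _ hj
      rw [if_neg]
      intro hc
      exact hj (Fin.ext (by simp; omega))
    · simp
lemma hreclem (n : ℕ) (hn : 1 ≤ n) (a : ℕ → ℍ[ℝ]) (lam : ℍ[ℝ]) (x : Fin n → ℍ[ℝ])
    (heq : ∀ i : Fin n,
        (if h : 1 ≤ (i : ℕ) then x ⟨(i : ℕ) - 1, by omega⟩ else 0)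
          + -a (n - (i : ℕ)) * x ⟨n - 1, by omega⟩ = lam * x i) :
    ∀ k, k ≤ n - 1 →
        x ⟨n - 1 - k, by omega⟩ = pval a lam k * x ⟨n - 1, by omega⟩ := by
  intro k
  induction k with
  | zero => intro _; simp [pval_zero]
  | succ k ih =>
    intro hk
    have ihk := ih (by omega)
    have h := heq ⟨n - 1 - k, by omega⟩
    simp only [Fin.val_mk] at h ihk ⊢
    rw [dif_pos (show 1 ≤ n - 1 - k by omega)] at h
    rw [show (⟨n - 1 - k - 1, by omega⟩ : Fin n) = ⟨n - 1 - (k + 1), by omega⟩ from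
      Fin.ext (by simp; omega)] at h
    rw [show n - (n - 1 - k) = k + 1 by omega] at h
    rw [ihk] at h
    rw [pval_succ, add_mul, mul_assoc]
    rw [neg_mul, ← sub_eq_add_neg] at h
    exact eq_add_of_sub_eq h

lemma key (n : ℕ) (hn : 1 ≤ n) (a : ℕ → ℍ[ℝ]) (lam : ℍ[ℝ]) :
    (∃ x : Fin n → ℍ[ℝ], x ≠ 0 ∧
        (companionMatrix n a).mulVec x = fun μ => lam * x μ) ↔ pval a lam n = 0 := by
  have hps : pval a lam n = lam * pval a lam (n - 1) + a n := by
    conv_lhs => rw [show n = n - 1 + 1 by omega]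
    rw [pval_succ, show n - 1 + 1 = n by omega]
  constructor
  · rintro ⟨x, hx, hev⟩
    have heq : ∀ i : Fin n,
        (if h : 1 ≤ (i : ℕ) then x ⟨(i : ℕ) - 1, by omega⟩ else 0)
          + -a (n - (i : ℕ)) * x ⟨n - 1, by omega⟩ = lam * x i := by
      intro i
      rw [← comp_mulVec n hn a x i, hev]
    have hrec := hreclem n hn a lam x heq
    have hlast : x ⟨n - 1, by omega⟩ ≠ 0 := by
      intro h0
      apply hx
      funext i
      have hi := i.isLt
      have hi2 : i = (⟨n - 1 - (n - 1 - (i : ℕ)), by omega⟩ : Fin n) := Fin.ext (by simp; omega)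
      rw [hi2, hrec (n - 1 - (i : ℕ)) (by omega), h0, mul_zero]
      rfl
    have h0 := heq ⟨0, by omega⟩
    simp only [Fin.val_mk] at h0
    rw [dif_neg (by omega)] at h0
    have hx0 := hrec (n - 1) le_rfl
    rw [show (⟨n - 1 - (n - 1), by omega⟩ : Fin n) = ⟨0, by omega⟩ from
      Fin.ext (by simp)] at hx0
    rw [hx0, Nat.sub_zero] at h0
    have hPm : pval a lam n * x ⟨n - 1, by omega⟩ = 0 := by
      rw [hps, add_mul, mul_assoc]
      rw [zero_add, neg_mul] at h0
      rw [← h0]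
      exact neg_add_cancel _
    rcases mul_eq_zero.mp hPm with h | h
    · exact h
    · exact absurd h hlast
  · intro hP
    refine ⟨fun i => pval a lam (n - 1 - (i : ℕ)), ?_, ?_⟩
    · intro h0
      have h1 := congrFun h0 ⟨n - 1, by omega⟩
      simp only [Nat.sub_self, pval_zero, Pi.zero_apply] at h1
      exact one_ne_zero h1
    · funext i
      have hi := i.isLt
      rw [comp_mulVec n hn a _ i]
      simp only [Fin.val_mk, Nat.sub_self, pval_zero, mul_one]
      by_cases h : 1 ≤ (i : ℕ)
      · rw [dif_pos h]
        rw [show n - 1 - ((i : ℕ) - 1) = (n - 1 - (i : ℕ)) + 1 by omega, pval_succ,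
          show n - (i : ℕ) = n - 1 - (i : ℕ) + 1 by omega]
        exact add_neg_cancel_right _ _
      · rw [dif_neg h]
        have h2 : (i : ℕ) = 0 := by omega
        rw [h2]
        simp only [Nat.sub_zero, zero_add]
        exact (eq_neg_of_add_eq_zero_left (hps ▸ hP)).symm

lemma diag_mulVec (n : ℕ) (v w : Fin n → ℍ[ℝ]) (M : Matrix (Fin n) (Fin n) ℍ[ℝ])
    (x : Fin n → ℍ[ℝ]) (i : Fin n) :
    (Matrix.diagonal v * M * Matrix.diagonal w).mulVec x i
      = v i * M.mulVec (fun j => w j * x j) i := by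
  have hw : (Matrix.diagonal w).mulVec x = fun j => w j * x j := by
    funext j
    rw [Matrix.mulVec_diagonal]
  rw [← Matrix.mulVec_mulVec, ← Matrix.mulVec_mulVec, hw, Matrix.mulVec_diagonal]

/-- Lemma 2: for `D = diag(d₁,…,d_n)` with positive real entries, the left
eigenvalues of `D⁻¹ C_P D` are exactly the zeros of
`P(q) = q^n + q^{n-1} a₁ + ⋯ + q a_{n-1} + a_n`. -/
theorem stmt_9 (n : ℕ) (hn : 1 ≤ n) (a : ℕ → ℍ[ℝ]) (d : Fin n → ℝ)
    (hd : ∀ i, 0 < d i) (lam : ℍ[ℝ]) :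
    (∃ x : Fin n → ℍ[ℝ], x ≠ 0 ∧
        (Matrix.diagonal (fun i => ((d i)⁻¹ : ℝ) • (1 : ℍ[ℝ])) *
          companionMatrix n a *
          Matrix.diagonal (fun i => (d i : ℝ) • (1 : ℍ[ℝ]))).mulVec x
          = fun μ => lam * x μ) ↔
      lam ^ n + ∑ ν ∈ Finset.Icc 1 n, lam ^ (n - ν) * a ν = 0 := by
  rw [show (lam ^ n + ∑ ν ∈ Finset.Icc 1 n, lam ^ (n - ν) * a ν) = pval a lam n from rfl]
  rw [← key n hn a lam]
  have hd0 : ∀ i, d i ≠ 0 := fun i => (hd i).ne'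
  constructor
  · rintro ⟨x, hx, hev⟩
    refine ⟨fun j => d j • x j, ?_, ?_⟩
    · intro h0
      apply hx
      funext j
      have h1 := congrFun h0 j
      simp only [Pi.zero_apply] at h1 ⊢
      exact (smul_eq_zero.mp h1).resolve_left (hd0 j)
    · funext i
      have hev' := congrFun hev i
      rw [diag_mulVec] at hev'
      simp only [smul_mul_assoc, one_mul] at hev'
      have h2 : (companionMatrix n a).mulVec (fun j => d j • x j) i
          = (d i) • ((d i)⁻¹ • (companionMatrix n a).mulVec (fun j => d j • x j) i) := by
        rw [smul_smul, mul_inv_cancel₀ (hd0 i), one_smul]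
      rw [h2, hev', mul_smul_comm]
  · rintro ⟨y, hy, hev⟩
    refine ⟨fun j => (d j)⁻¹ • y j, ?_, ?_⟩
    · intro h0
      apply hy
      funext j
      have h1 := congrFun h0 j
      simp only [Pi.zero_apply] at h1 ⊢
      rcases smul_eq_zero.mp h1 with h | h
      · exact absurd h (inv_ne_zero (hd0 j))
      · exact h
    · funext i
      rw [diag_mulVec]
      simp only [smul_mul_assoc, one_mul]
      have hdx : (fun j => d j • (d j)⁻¹ • y j) = y := by
        funext j
        rw [smul_smul, mul_inv_cancel₀ (hd0 j), one_smul]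
      rw [hdx, congrFun hev i, mul_smul_comm]
end

section
/- Let f(q) be a quaternion polynomial of degree n ≥ 1 and r > 0 a real number. Then max over |q| = r of |f'(q)| ≤ (n/r) · max over |q| = r of |f(q)|. -/
/-!
Fix `q₀` with `‖q₀‖ = r`, a unit imaginary `I` commuting with `q₀`, and a quaternion `u`,
`‖u‖ ≤ 1`, with `f'(q₀) u = ‖f'(q₀)‖`. Since `q₀ e^{-Iθ}` stays on the sphere,
`g(θ) = ⟪e^{Inθ} f(q₀ e^{-Iθ}) u, q₀⟫` is a real trigonometric polynomial of degree at most `n`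
bounded by `r · max ‖f‖`, and its cosine coefficients `A j` at frequency `n - j` satisfy
`∑ j A j = r² ‖f'(q₀)‖`. Integrating `g` against the Fejér kernel, whose `k`-th cosine moment
is proportional to `n - k`, gives `∑ j A j ≤ n · sup g`, which is the inequality.
-/

open scoped Quaternion InnerProductSpace
open Real Finset intervalIntegral

theorem integral_cos_int_mul (z : ℤ) :
    ∫ θ in (0 : ℝ)..2 * π, cos (z * θ) = if z = 0 then 2 * π else 0 := by
  split_ifs with hz
  · simp [hz]
  have hz' : (z : ℝ) ≠ 0 := Int.cast_ne_zero.mpr hz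
  rw [integral_comp_mul_left (fun x => cos x) hz', integral_cos, mul_zero, sin_zero, sub_zero,
    ← sub_zero ((z : ℝ) * (2 * π)), sin_int_mul_two_pi_sub, sin_zero, neg_zero, smul_zero]

theorem integral_sin_int_mul (z : ℤ) : ∫ θ in (0 : ℝ)..2 * π, sin (z * θ) = 0 := by
  rcases eq_or_ne z 0 with hz | hz
  · simp [hz]
  have hz' : (z : ℝ) ≠ 0 := Int.cast_ne_zero.mpr hz
  rw [integral_comp_mul_left (fun x => sin x) hz', integral_sin, mul_zero, cos_zero,
    cos_int_mul_two_pi, sub_self, smul_zero]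

/-- `n` times the usual Fejér kernel, i.e. `|∑_{m<n} e^{imθ}|²`. -/
noncomputable def fejerKernel (n : ℕ) (θ : ℝ) : ℝ :=
  ∑ m ∈ range n, ∑ l ∈ range n, cos ((m - l) * θ)

theorem fejerKernel_eq_sq_add_sq (n : ℕ) (θ : ℝ) :
    fejerKernel n θ = (∑ m ∈ range n, cos (m * θ)) ^ 2 + (∑ m ∈ range n, sin (m * θ)) ^ 2 := by
  simp only [fejerKernel, sq, sum_mul_sum, ← sum_add_distrib, sub_mul, cos_sub]

theorem fejerKernel_nonneg (n : ℕ) (θ : ℝ) : 0 ≤ fejerKernel n θ := by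
  rw [fejerKernel_eq_sq_add_sq]
  positivity

@[fun_prop]
theorem continuous_fejerKernel (n : ℕ) : Continuous (fejerKernel n) := by
  unfold fejerKernel
  fun_prop

theorem sum_sum_sin_sub_mul_eq_zero (n : ℕ) (θ : ℝ) :
    ∑ m ∈ range n, ∑ l ∈ range n, sin ((m - l : ℝ) * θ) = 0 := by
  have h : ∑ m ∈ range n, ∑ l ∈ range n, sin ((m - l : ℝ) * θ)
      = -∑ m ∈ range n, ∑ l ∈ range n, sin ((m - l : ℝ) * θ) := by
    conv_rhs => rw [sum_comm]
    simp only [← sum_neg_distrib, ← sin_neg, ← neg_mul, neg_sub]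
  linarith

theorem cos_mul_fejerKernel (n : ℕ) (x θ : ℝ) :
    cos x * fejerKernel n θ = ∑ m ∈ range n, ∑ l ∈ range n, cos (x + (m - l) * θ) := by
  simp only [cos_add, sum_sub_distrib, ← mul_sum, sum_sum_sin_sub_mul_eq_zero, fejerKernel]
  ring

theorem sin_mul_fejerKernel (n : ℕ) (x θ : ℝ) :
    sin x * fejerKernel n θ = ∑ m ∈ range n, ∑ l ∈ range n, sin (x + (m - l) * θ) := by
  simp only [sin_add, sum_add_distrib, ← mul_sum, sum_sum_sin_sub_mul_eq_zero, fejerKernel]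
  ring

theorem sum_range_ite_add_lt (n k : ℕ) (c : ℝ) :
    ∑ m ∈ range n, (if m + k < n then c else 0) = (n - k : ℕ) * c := by
  rw [← sum_filter, sum_const, nsmul_eq_mul, ← card_range (n - k)]
  congr 3
  ext m
  simp only [mem_filter, mem_range]
  omega

theorem integral_cos_mul_fejerKernel {n k : ℕ} (hk : k ≤ n) :
    ∫ θ in (0 : ℝ)..2 * π, cos (k * θ) * fejerKernel n θ = 2 * π * (n - k) := by
  have hfreq (m l : ℕ) (θ : ℝ) : (k : ℝ) * θ + (m - l) * θ = ((k + m - l : ℤ) : ℝ) * θ := by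
    push_cast
    ring
  have hrow (m : ℕ) : ∫ θ in (0 : ℝ)..2 * π, ∑ l ∈ range n, cos (((k + m - l : ℤ) : ℝ) * θ)
      = if m + k < n then 2 * π else 0 := by
    rw [integral_finsetSum fun _ _ ↦ Continuous.intervalIntegrable (by fun_prop) _ _]
    simp only [integral_cos_int_mul, sum_ite_eq, mem_range,
      show ∀ l : ℕ, ((k + m - l : ℤ) = 0 ↔ m + k = l) from fun l ↦ by omega]
  simp only [cos_mul_fejerKernel, hfreq]
  rw [integral_finsetSum fun _ _ ↦ Continuous.intervalIntegrable (by fun_prop) _ _]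
  simp only [hrow, sum_range_ite_add_lt, Nat.cast_sub hk]
  ring

theorem integral_sin_mul_fejerKernel (n k : ℕ) :
    ∫ θ in (0 : ℝ)..2 * π, sin (k * θ) * fejerKernel n θ = 0 := by
  have hfreq (m l : ℕ) (θ : ℝ) : (k : ℝ) * θ + (m - l) * θ = ((k + m - l : ℤ) : ℝ) * θ := by
    push_cast
    ring
  have hrow (m : ℕ) :
      ∫ θ in (0 : ℝ)..2 * π, ∑ l ∈ range n, sin (((k + m - l : ℤ) : ℝ) * θ) = 0 := by
    rw [integral_finsetSum fun _ _ ↦ Continuous.intervalIntegrable (by fun_prop) _ _]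
    simp only [integral_sin_int_mul, sum_const_zero]
  simp only [sin_mul_fejerKernel, hfreq]
  rw [integral_finsetSum fun _ _ ↦ Continuous.intervalIntegrable (by fun_prop) _ _]
  simp only [hrow, sum_const_zero]

theorem sum_mul_le_of_forall_trigPoly_le {n : ℕ} {A B : ℕ → ℝ} {M : ℝ}
    (h : ∀ θ, ∑ j ∈ range (n + 1), (A j * cos ((n - j) * θ) + B j * sin ((n - j) * θ)) ≤ M) :
    ∑ j ∈ range (n + 1), j * A j ≤ n * M := by
  set g : ℝ → ℝ :=
    fun θ ↦ ∑ j ∈ range (n + 1), (A j * cos ((n - j) * θ) + B j * sin ((n - j) * θ))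
  have hgF : ∫ θ in (0 : ℝ)..2 * π, g θ * fejerKernel n θ
      = ∑ j ∈ range (n + 1), 2 * π * (j * A j) := by
    have hexpand (θ : ℝ) : g θ * fejerKernel n θ = ∑ j ∈ range (n + 1),
        (A j * (cos ((n - j) * θ) * fejerKernel n θ)
          + B j * (sin ((n - j) * θ) * fejerKernel n θ)) := by
      simp only [g, sum_mul]
      exact sum_congr rfl fun _ _ ↦ by ring
    simp only [hexpand]
    rw [integral_finsetSum fun _ _ ↦ Continuous.intervalIntegrable (by fun_prop) _ _]
    refine sum_congr rfl fun j hj ↦ ?_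
    have hjn : j ≤ n := Nat.lt_succ_iff.mp (mem_range.mp hj)
    have hcast : (n - j : ℝ) = (n - j : ℕ) := (Nat.cast_sub hjn).symm
    rw [integral_add (Continuous.intervalIntegrable (by fun_prop) _ _)
      (Continuous.intervalIntegrable (by fun_prop) _ _), integral_const_mul, integral_const_mul,
      hcast, integral_cos_mul_fejerKernel (Nat.sub_le n j), integral_sin_mul_fejerKernel,
      Nat.cast_sub hjn]
    ring
  have hF : ∫ θ in (0 : ℝ)..2 * π, fejerKernel n θ = 2 * π * n := by
    simpa using integral_cos_mul_fejerKernel (Nat.zero_le n)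
  have hle : ∫ θ in (0 : ℝ)..2 * π, g θ * fejerKernel n θ
      ≤ ∫ θ in (0 : ℝ)..2 * π, M * fejerKernel n θ :=
    integral_mono_on (by positivity) (Continuous.intervalIntegrable (by fun_prop) _ _)
      (Continuous.intervalIntegrable (by fun_prop) _ _)
      fun θ _ ↦ mul_le_mul_of_nonneg_right (h θ) (fejerKernel_nonneg n θ)
  rw [hgF, ← mul_sum, integral_const_mul, hF] at hle
  nlinarith [pi_pos]

namespace Quaternion

/-- `e^{Iθ}`: for `I * I = -1` this is the image of `e^{iθ}` under `ℂ → ℝ + ℝI`. -/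
noncomputable def cis (I : ℍ[ℝ]) (θ : ℝ) : ℍ[ℝ] := ↑(cos θ) + sin θ • I

section cis

variable {I : ℍ[ℝ]}

theorem cis_eq_liftAux (hI : I * I = -1) (θ : ℝ) :
    cis I θ = Complex.liftAux I hI (Complex.exp (θ * Complex.I)) := by
  rw [Complex.liftAux_apply, Complex.exp_ofReal_mul_I_re, Complex.exp_ofReal_mul_I_im]
  rfl

theorem cis_add (hI : I * I = -1) (θ φ : ℝ) : cis I (θ + φ) = cis I θ * cis I φ := by
  simp only [cis_eq_liftAux hI, ← map_mul, ← Complex.exp_add, Complex.ofReal_add, add_mul]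

theorem cis_zero : cis I 0 = 1 := by
  simp [cis]

theorem cis_pow (hI : I * I = -1) (θ : ℝ) (j : ℕ) : cis I θ ^ j = cis I (j * θ) := by
  rw [cis_eq_liftAux hI, cis_eq_liftAux hI, ← map_pow, ← Complex.exp_nat_mul]
  push_cast
  ring_nf

theorem star_cis (hre : I.re = 0) (θ : ℝ) : star (cis I θ) = cis I (-θ) := by
  simp [cis, star_eq_neg.mpr hre]

theorem norm_cis (hI : I * I = -1) (hre : I.re = 0) (θ : ℝ) : ‖cis I θ‖ = 1 := by
  have h : normSq (cis I θ) = 1 := coe_injective <| by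
    rw [coe_one, ← self_mul_star, star_cis hre, ← cis_add hI, add_neg_cancel, cis_zero]
  rw [norm_eq_sqrt_real_inner, inner_self, h, Real.sqrt_one]

theorem _root_.Commute.cis_right {q : ℍ[ℝ]} (h : Commute q I) (θ : ℝ) :
    Commute q (cis I θ) :=
  (coe_commute _ q).symm.add_right (h.smul_right _)

theorem cis_mul (θ : ℝ) (c : ℍ[ℝ]) : cis I θ * c = cos θ • c + sin θ • (I * c) := by
  rw [cis, add_mul, coe_mul_eq_smul, smul_mul_assoc]

end cis

theorem exists_mul_self_eq_neg_one_commute (q : ℍ[ℝ]) :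
    ∃ I : ℍ[ℝ], I * I = -1 ∧ I.re = 0 ∧ Commute q I := by
  rcases eq_or_ne q.im 0 with him | him
  · refine ⟨(Complex.I : ℍ[ℝ]), ?_, by rw [re_coeComplex, Complex.I_re], ?_⟩
    · rw [← coeComplex_mul, Complex.I_mul_I]
      ext <;> simp
    · rw [← re_add_im q, him, add_zero]
      exact coe_commute _ _
  · refine ⟨‖q.im‖⁻¹ • q.im, ?_, by rw [re_smul, re_im, smul_zero], ?_⟩
    · rw [smul_mul_smul_comm, ← sq q.im, im_sq, normSq_eq_norm_mul_self, smul_neg, smul_coe,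
        ← mul_inv, inv_mul_cancel₀ (by simpa using him), coe_one]
    · refine Commute.smul_right ?_ _
      conv_lhs => rw [← re_add_im q]
      exact (coe_commute _ _).add_left (Commute.refl _)

theorem exists_norm_le_one_mul_eq_norm (D : ℍ[ℝ]) : ∃ u : ℍ[ℝ], ‖u‖ ≤ 1 ∧ D * u = ‖D‖ := by
  refine ⟨‖D‖⁻¹ • star D, ?_, ?_⟩
  · rw [norm_smul, norm_star, norm_inv, norm_norm]
    exact inv_mul_le_one_of_le₀ le_rfl (norm_nonneg _)
  · rw [mul_smul_comm, self_mul_star, normSq_eq_norm_mul_self, smul_coe, ← mul_assoc,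
      inv_mul_mul_self]

theorem cis_mul_pow_mul (I q : ℍ[ℝ]) (hI : I * I = -1) (hq : Commute q I) (n j : ℕ) (θ : ℝ)
    (c : ℍ[ℝ]) : cis I (n * θ) * ((q * cis I (-θ)) ^ j * c)
      = cos ((n - j) * θ) • (q ^ j * c) + sin ((n - j) * θ) • (q ^ j * (I * c)) := by
  have hturn : cis I (n * θ) * cis I (-θ) ^ j = cis I ((n - j) * θ) := by
    rw [cis_pow hI, ← cis_add hI]
    ring_nf
  rw [(hq.cis_right _).mul_pow, mul_assoc (q ^ j), ← mul_assoc (cis _ _),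
    ← ((hq.cis_right _).pow_left j).eq, mul_assoc (q ^ j), ← mul_assoc (cis _ _), hturn, cis_mul,
    mul_add, mul_smul_comm, mul_smul_comm]

theorem mul_sum_Icc_natCast_mul_pow_mul (q : ℍ[ℝ]) (b : ℕ → ℍ[ℝ]) (n : ℕ) :
    q * ∑ j ∈ Icc 1 n, (j : ℍ[ℝ]) * q ^ (j - 1) * b j
      = ∑ j ∈ range (n + 1), (j : ℝ) • (q ^ j * b j) := by
  rw [sum_range_succ', Nat.cast_zero, zero_smul, add_zero, mul_sum,
    ← Ico_add_one_right_eq_Icc, sum_Ico_eq_sum_range, Nat.add_sub_cancel]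
  refine sum_congr rfl fun j _ ↦ ?_
  rw [add_comm 1 j, Nat.add_sub_cancel, ← mul_assoc, ← mul_assoc, ← (Nat.cast_commute _ q).eq,
    mul_assoc _ q, ← pow_succ', mul_assoc, Nat.cast_smul_eq_nsmul, nsmul_eq_mul]

theorem norm_sum_deriv_le_of_forall_norm_le {n : ℕ} {b : ℕ → ℍ[ℝ]} {r M : ℝ} (hr : 0 < r)
    (hM : ∀ q : ℍ[ℝ], ‖q‖ = r → ‖∑ j ∈ range (n + 1), q ^ j * b j‖ ≤ M)
    {q₀ : ℍ[ℝ]} (hq₀ : ‖q₀‖ = r) :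
    ‖∑ j ∈ Icc 1 n, (j : ℍ[ℝ]) * q₀ ^ (j - 1) * b j‖ ≤ n / r * M := by
  set D := ∑ j ∈ Icc 1 n, (j : ℍ[ℝ]) * q₀ ^ (j - 1) * b j
  obtain ⟨I, hI, hre, hq₀I⟩ := exists_mul_self_eq_neg_one_commute q₀
  obtain ⟨u, hu, hDu⟩ := exists_norm_le_one_mul_eq_norm D
  have hcoeff : ∑ j ∈ range (n + 1), j * ⟪q₀ ^ j * (b j * u), q₀⟫_ℝ = ‖D‖ * r ^ 2 := by
    calc _ = ⟪(∑ j ∈ range (n + 1), (j : ℝ) • (q₀ ^ j * b j)) * u, q₀⟫_ℝ := by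
          simp only [sum_mul, sum_inner, smul_mul_assoc, mul_assoc, real_inner_smul_left]
      _ = ‖D‖ * r ^ 2 := by
          rw [← mul_sum_Icc_natCast_mul_pow_mul, mul_assoc, hDu, mul_coe_eq_smul,
            real_inner_smul_left, real_inner_self_eq_norm_sq, hq₀]
  have htrig (θ : ℝ) : ∑ j ∈ range (n + 1), (⟪q₀ ^ j * (b j * u), q₀⟫_ℝ * cos ((n - j) * θ)
      + ⟪q₀ ^ j * (I * (b j * u)), q₀⟫_ℝ * sin ((n - j) * θ)) ≤ r * M := by
    set f := ∑ j ∈ range (n + 1), (q₀ * cis I (-θ)) ^ j * b j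
    have hf : ‖f‖ ≤ M := hM _ (by rw [norm_mul, norm_cis hI hre, mul_one, hq₀])
    calc _ = ⟪cis I (n * θ) * (f * u), q₀⟫_ℝ := by
          simp only [f, sum_mul, mul_sum, sum_inner, mul_assoc, cis_mul_pow_mul I q₀ hI hq₀I,
            inner_add_left, real_inner_smul_left]
          exact sum_congr rfl fun _ _ ↦ by ring
      _ ≤ ‖cis I (n * θ) * (f * u)‖ * ‖q₀‖ := real_inner_le_norm _ _
      _ ≤ r * M := by
          rw [norm_mul, norm_mul, norm_cis hI hre, one_mul, hq₀, mul_comm]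
          gcongr
          exact (mul_le_of_le_one_right (norm_nonneg _) hu).trans hf
  have hfejer := sum_mul_le_of_forall_trigPoly_le htrig
  rw [hcoeff] at hfejer
  rw [div_mul_eq_mul_div, le_div_iff₀ hr]
  nlinarith

end Quaternion

theorem stmt_11_general (n : ℕ) (a : ℕ → ℍ[ℝ])
    (r : ℝ) (hr : 0 < r) :
    sSup {y : ℝ | ∃ q : ℍ[ℝ], ‖q‖ = r ∧
        y = ‖∑ j ∈ Finset.Icc 1 n, (j : ℍ[ℝ]) * q ^ (j - 1) * a j‖}
      ≤ (n / r) *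
        sSup {y : ℝ | ∃ q : ℍ[ℝ], ‖q‖ = r ∧
          y = ‖∑ j ∈ Finset.range (n + 1), q ^ j * a j‖} := by
  have hbdd : BddAbove {y : ℝ | ∃ q : ℍ[ℝ], ‖q‖ = r ∧
      y = ‖∑ j ∈ Finset.range (n + 1), q ^ j * a j‖} := by
    refine ⟨∑ j ∈ range (n + 1), r ^ j * ‖a j‖, ?_⟩
    rintro _ ⟨q, hq, rfl⟩
    refine (norm_sum_le _ _).trans (sum_le_sum fun j _ ↦ ?_)
    rw [norm_mul, norm_pow, hq]
  have hr_mem : ‖((r : ℝ) : ℍ[ℝ])‖ = r := by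
    rw [Quaternion.norm_coe, Real.norm_of_nonneg hr.le]
  refine csSup_le ⟨_, _, hr_mem, rfl⟩ ?_
  rintro _ ⟨q₀, hq₀, rfl⟩
  exact Quaternion.norm_sum_deriv_le_of_forall_norm_le hr
    (fun q hq ↦ le_csSup hbdd ⟨q, hq, rfl⟩) hq₀

/-- Bernstein's inequality on the sphere of radius `r` for quaternion
polynomials: `max_{‖q‖=r} ‖f'(q)‖ ≤ (n/r) max_{‖q‖=r} ‖f(q)‖`, where
`f(q) = ∑_{j=0}^n q^j a_j` with `a_n ≠ 0` and
`f'(q) = ∑_{j=1}^n j q^{j-1} a_j`. -/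
theorem stmt_11 (n : ℕ) (hn : 1 ≤ n) (a : ℕ → ℍ[ℝ]) (han : a n ≠ 0)
    (r : ℝ) (hr : 0 < r) :
    sSup {y : ℝ | ∃ q : ℍ[ℝ], ‖q‖ = r ∧
        y = ‖∑ j ∈ Finset.Icc 1 n, (j : ℍ[ℝ]) * q ^ (j - 1) * a j‖}
      ≤ (n / r) *
        sSup {y : ℝ | ∃ q : ℍ[ℝ], ‖q‖ = r ∧
          y = ‖∑ j ∈ Finset.range (n + 1), q ^ j * a j‖} :=
  stmt_11_general n a r hr
end

section
/- Let f(q) be a quaternion polynomial of degree n ≥ 1, r > 0 a real number, and 1 ≤ k ≤ n. Then max over |q| = r of |f^(k)(q)| ≤ (n(n−1)⋯(n−k+1)/r^k) · max over |q| = r of |f(q)|. -/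
/-
By iteration it suffices to prove Bernstein's inequality
`‖f'(q₀)‖ ≤ (n / r) max_{‖q‖=r} ‖f(q)‖` for `f(q) = ∑ qᵉ bₑ`. Write `q₀ = x + yI` in a slice
`ℂ_I` (`I² = -1`) and pick `u` with `‖u‖ ≤ 1` and `f'(q₀) u = ‖f'(q₀)‖`. Projecting
`w ↦ f(x + yI) u` onto `ℂ_I` along `ℂ_I J` gives a complex polynomial `p` of degree `≤ n`,
bounded on `|w| = r` by the maximum of `‖f‖`, with `p'(w₀) = ‖f'(q₀)‖`; so it is enough to prove
the complex Bernstein inequality.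

For that, if `|p'(z₀)| > nM/r` on `|z₀| = r`, put `c = p'(z₀) / (n z₀ⁿ⁻¹)`. The maximum principle
for `wⁿ p(1/w)` gives `|p(z)| ≤ M |z|ⁿ / rⁿ` for `|z| ≥ r`, so `|c| > M / rⁿ` confines every zero
of `p - c zⁿ` to the open disc of radius `r`, while `z₀` is a critical point of it: this
contradicts the Gauss–Lucas theorem.
-/

open Finset Polynomial
open scoped Quaternion

section derivCoeff

variable {R : Type*} [Semiring R]

def derivCoeff (b : ℕ → R) (e : ℕ) : R := ((e + 1 : ℕ) : R) * b (e + 1)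

theorem iterate_derivCoeff_apply (b : ℕ → R) (k e : ℕ) :
    derivCoeff^[k] b e = ((e + k).descFactorial k : R) * b (e + k) := by
  induction k generalizing b with
  | zero => simp
  | succ k ih =>
    rw [Function.iterate_succ_apply, ih, derivCoeff, ← mul_assoc, ← Nat.cast_mul, mul_comm,
      ← Nat.succ_descFactorial_succ]
    rfl

theorem Polynomial.derivative_sum_range_C_mul_X_pow (c : ℕ → R) (m : ℕ) :
    derivative (∑ e ∈ range (m + 1), C (c e) * X ^ e) =
      ∑ e ∈ range m, C (derivCoeff c e) * X ^ e := by
  rw [derivative_sum, sum_range_succ']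
  simp only [derivative_C_mul_X_pow, Nat.cast_zero, mul_zero, C_0, zero_mul, add_zero,
    Nat.add_sub_cancel, derivCoeff, (Nat.cast_commute _ _).eq]

end derivCoeff

namespace Polynomial

theorem eval_reflect_of_ne_zero {K : Type*} [Field K] {p : K[X]} {m : ℕ} (hp : p.natDegree ≤ m)
    {w : K} (hw : w ≠ 0) : (p.reflect m).eval w = w ^ m * p.eval w⁻¹ := by
  let := invertibleOfNonzero (inv_ne_zero hw)
  have h : (p.reflect m).eval w * (w ^ m)⁻¹ = p.eval w⁻¹ := by
    simpa [invOf_eq_inv] using eval₂_reflect_mul_pow (RingHom.id K) w⁻¹ m p hp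
  rw [← h, mul_comm, inv_mul_cancel_right₀ (pow_ne_zero _ hw)]

variable {p : ℂ[X]} {m : ℕ} {r M : ℝ}

theorem norm_eval_reflect_le (hp : p.natDegree ≤ m) (hr : 0 < r)
    (hM : ∀ z : ℂ, ‖z‖ = r → ‖p.eval z‖ ≤ M) {w : ℂ} (hw : ‖w‖ ≤ r⁻¹) :
    ‖(p.reflect m).eval w‖ ≤ M / r ^ m := by
  refine Complex.norm_le_of_forall_mem_frontier_norm_le (U := Metric.ball 0 r⁻¹)
    Metric.isBounded_ball
    (p.reflect m).differentiable.diffContOnCl (fun z hz => ?_)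
    (by rwa [closure_ball 0 (by positivity), mem_closedBall_zero_iff])
  rw [frontier_ball 0 (by positivity), mem_sphere_zero_iff_norm] at hz
  have hz0 : z ≠ 0 := norm_pos_iff.mp (by rw [hz]; positivity)
  rw [eval_reflect_of_ne_zero hp hz0, norm_mul, norm_pow, hz, inv_pow, inv_mul_eq_div]
  gcongr
  exact hM _ (by rw [norm_inv, hz, inv_inv])

theorem norm_coeff_le_of_norm_eval_le (hp : p.natDegree ≤ m) (hr : 0 < r)
    (hM : ∀ z : ℂ, ‖z‖ = r → ‖p.eval z‖ ≤ M) : ‖p.coeff m‖ ≤ M / r ^ m := by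
  have h := norm_eval_reflect_le hp hr hM (w := 0) (by simp; positivity)
  rwa [← coeff_zero_eq_eval_zero, coeff_reflect, revAt_le (Nat.zero_le m), Nat.sub_zero] at h

theorem norm_eval_le_of_le_norm (hp : p.natDegree ≤ m) (hr : 0 < r)
    (hM : ∀ z : ℂ, ‖z‖ = r → ‖p.eval z‖ ≤ M) {z : ℂ} (hz : r ≤ ‖z‖) :
    ‖p.eval z‖ ≤ M / r ^ m * ‖z‖ ^ m := by
  have hz0 : 0 < ‖z‖ := hr.trans_le hz
  have h := norm_eval_reflect_le hp hr hM (w := z⁻¹) (by rw [norm_inv]; exact inv_anti₀ hr hz)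
  rw [eval_reflect_of_ne_zero hp (inv_ne_zero (norm_pos_iff.mp hz0)), inv_inv, norm_mul, norm_pow,
    norm_inv, inv_pow, inv_mul_le_iff₀ (by positivity)] at h
  linarith

theorem rootSet_sub_C_mul_X_pow_subset_ball (hp : p.natDegree ≤ m) (hr : 0 < r)
    (hM : ∀ z : ℂ, ‖z‖ = r → ‖p.eval z‖ ≤ M) {c : ℂ} (hc : M / r ^ m < ‖c‖) :
    (p - C c * X ^ m).rootSet ℂ ⊆ Metric.ball 0 r := by
  intro a ha
  rw [mem_rootSet, coe_aeval_eq_eval, eval_sub, eval_mul, eval_C, eval_pow, eval_X,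
    sub_eq_zero] at ha
  rw [mem_ball_zero_iff]
  by_contra! hra
  have h := norm_eval_le_of_le_norm hp hr hM hra
  rw [ha.2, norm_mul, norm_pow] at h
  have := le_of_mul_le_mul_right h (pow_pos (hr.trans_le hra) m)
  linarith

theorem norm_eval_derivative_le (hp : p.natDegree ≤ m) (hr : 0 < r)
    (hM : ∀ z : ℂ, ‖z‖ = r → ‖p.eval z‖ ≤ M) {z₀ : ℂ} (hz₀ : ‖z₀‖ = r) :
    ‖p.derivative.eval z₀‖ ≤ m * M / r := by
  by_contra! hbig
  have hm : m ≠ 0 := by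
    rintro rfl
    simp [derivative_of_natDegree_zero (Nat.le_zero.mp hp)] at hbig
  have hz₀0 : z₀ ≠ 0 := norm_pos_iff.mp (by rw [hz₀]; exact hr)
  set c := p.derivative.eval z₀ / (m * z₀ ^ (m - 1))
  have hc : M / r ^ m < ‖c‖ := by
    have hrm : r ^ m = r * r ^ (m - 1) := by rw [← pow_succ', Nat.sub_add_cancel (by omega)]
    rw [norm_div, norm_mul, norm_pow, hz₀, Complex.norm_natCast, lt_div_iff₀ (by positivity),
      hrm, div_mul_eq_mul_div, div_lt_iff₀ (by positivity)]
    calc M * (m * r ^ (m - 1)) = m * M / r * (r * r ^ (m - 1)) := by field_simp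
      _ < _ := by gcongr
  set G := p - C c * X ^ m
  have hGm : G.coeff m ≠ 0 := by
    have hpm := norm_coeff_le_of_norm_eval_le hp hr hM
    rw [coeff_sub, coeff_C_mul_X_pow, if_pos rfl, sub_ne_zero]
    intro h
    rw [h] at hpm
    linarith
  have hGdeg : 0 < G.degree :=
    lt_of_lt_of_le (by exact_mod_cast Nat.pos_of_ne_zero hm) (le_degree_of_ne_zero hGm)
  have hG'0 : G.derivative ≠ 0 := fun h =>
    (natDegree_pos_iff_degree_pos.mpr hGdeg).ne' (derivative_eq_zero.mp h)
  have hz₀root : z₀ ∈ G.derivative.rootSet ℂ := by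
    rw [mem_rootSet, coe_aeval_eq_eval]
    refine ⟨hG'0, ?_⟩
    simp only [G, derivative_sub, derivative_C_mul_X_pow, eval_sub, eval_C, eval_mul, eval_pow,
      eval_X, c]
    field_simp
    ring
  have hball := convexHull_min (rootSet_sub_C_mul_X_pow_subset_ball hp hr hM hc) (convex_ball 0 r)
    (rootSet_derivative_subset_convexHull_rootSet hGdeg hz₀root)
  rw [mem_ball_zero_iff, hz₀] at hball
  exact lt_irrefl r hball

end Polynomial

namespace Quaternion

variable {I : ℍ}

theorem re_eq_zero_and_normSq_eq_one_of_mul_self_eq_neg_one (hI : I * I = -1) :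
    I.re = 0 ∧ normSq I = 1 := by
  have h0 := congrArg (·.re) hI
  have h1 := congrArg (·.imI) hI
  have h2 := congrArg (·.imJ) hI
  have h3 := congrArg (·.imK) hI
  simp only [re_mul, imI_mul, imJ_mul, imK_mul, re_neg, imI_neg, imJ_neg, imK_neg, re_one,
    imI_one, imJ_one, imK_one] at h0 h1 h2 h3
  have hre : I.re = 0 := by
    nlinarith [sq_nonneg I.re, sq_nonneg (I.re * I.imI), sq_nonneg (I.re * I.imJ),
      sq_nonneg (I.re * I.imK)]
  refine ⟨hre, ?_⟩
  rw [normSq_def']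
  linear_combination -h0 + 2 * I.re * hre

theorem norm_liftAux (hI : I * I = -1) (w : ℂ) : ‖Complex.liftAux I hI w‖ = ‖w‖ := by
  obtain ⟨hre, hn⟩ := re_eq_zero_and_normSq_eq_one_of_mul_self_eq_neg_one hI
  rw [normSq_def'] at hn
  have h : normSq (Complex.liftAux I hI w) = Complex.normSq w := by
    simp only [Complex.liftAux_apply, normSq_def', Complex.normSq_apply,
      Algebra.algebraMap_eq_smul_one]
    simp only [re_add, re_smul, re_one, smul_eq_mul, mul_one, hre, mul_zero, add_zero, imI_add,
      imI_smul, imI_one, zero_add, imJ_add, imJ_smul, imJ_one, imK_add, imK_smul, imK_one]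
    linear_combination w.im ^ 2 * hn - w.im ^ 2 * hre * I.re
  rwa [← sq_eq_sq₀ (norm_nonneg _) (norm_nonneg _), ← Complex.normSq_eq_norm_sq, sq,
    ← normSq_eq_norm_mul_self]

theorem exists_liftAux_eq (q : ℍ) : ∃ (I : ℍ) (hI : I * I = -1) (w : ℂ),
    Complex.liftAux I hI w = q := by
  by_cases him : q.im = 0
  · refine ⟨Complex.I, by rw [← coeComplex_mul, Complex.I_mul_I]; ext <;> simp, q.re, ?_⟩
    rw [← q.re_add_im, him]
    simp
  · have hn : 0 < ‖q.im‖ := norm_pos_iff.mpr him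
    refine ⟨‖q.im‖⁻¹ • q.im, ?_, ⟨q.re, ‖q.im‖⟩, ?_⟩
    · rw [smul_mul_smul_comm, ← sq, ← sq, im_sq, normSq_eq_norm_mul_self, smul_neg, ← sq,
        ← coe_mul_eq_smul, ← coe_mul, ← mul_pow, inv_mul_cancel₀ hn.ne', one_pow, coe_one]
    · simp [hn.ne']

/-- For `I * I = -1`, the projection of `ℍ = ℂ_I ⊕ ℂ_I J` onto the slice `ℂ_I ≅ ℂ`
along `ℂ_I J`. -/
noncomputable def sliceProj (I : ℍ) : ℍ →ₗ[ℝ] ℂ where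
  toFun p := ⟨p.re, -(I * p).re⟩
  map_add' p q := by
    apply Complex.ext <;> simp only [mul_add, re_add, neg_add, Complex.add_re, Complex.add_im]
  map_smul' t p := by
    apply Complex.ext <;>
      simp only [mul_smul_comm, re_smul, smul_eq_mul, RingHom.id_apply, Complex.real_smul,
        Complex.re_ofReal_mul, Complex.im_ofReal_mul, mul_neg]

@[simp] theorem sliceProj_apply_re (I p : ℍ) : (sliceProj I p).re = p.re := rfl

@[simp] theorem sliceProj_apply_im (I p : ℍ) : (sliceProj I p).im = -(I * p).re := rfl

theorem sliceProj_liftAux_mul (hI : I * I = -1) (w : ℂ) (p : ℍ) :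
    sliceProj I (Complex.liftAux I hI w * p) = w * sliceProj I p := by
  have hmul : Complex.liftAux I hI w * p = w.re • p + w.im • (I * p) := by
    rw [Complex.liftAux_apply, add_mul, smul_mul_assoc, Algebra.algebraMap_eq_smul_one,
      smul_mul_assoc, one_mul]
  have hIIp : (I * (I * p)).re = -p.re := by rw [← mul_assoc, hI]; simp
  apply Complex.ext
  · simp only [sliceProj_apply_re, sliceProj_apply_im, hmul, re_add, re_smul, Complex.mul_re]
    ring
  · simp only [sliceProj_apply_re, sliceProj_apply_im, hmul, mul_add, mul_smul_comm, re_add,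
      re_smul, hIIp, Complex.mul_im]
    ring

theorem sliceProj_coe (hI : I * I = -1) (t : ℝ) : sliceProj I t = t := by
  have hre := (re_eq_zero_and_normSq_eq_one_of_mul_self_eq_neg_one hI).1
  apply Complex.ext <;> simp [hre]

theorem norm_sliceProj_le (hI : I * I = -1) (p : ℍ) : ‖sliceProj I p‖ ≤ ‖p‖ := by
  obtain ⟨hre, hn⟩ := re_eq_zero_and_normSq_eq_one_of_mul_self_eq_neg_one hI
  rw [normSq_def'] at hn
  have h : Complex.normSq (sliceProj I p) ≤ normSq p := by
    simp only [Complex.normSq_apply, sliceProj_apply_re, sliceProj_apply_im, re_mul, hre,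
      normSq_def']
    nlinarith [sq_nonneg (p.imI * I.imJ - p.imJ * I.imI), sq_nonneg (p.imI * I.imK - p.imK * I.imI),
      sq_nonneg (p.imJ * I.imK - p.imK * I.imJ)]
  rwa [← sq_le_sq₀ (norm_nonneg _) (norm_nonneg _), ← Complex.normSq_eq_norm_sq, sq,
    ← normSq_eq_norm_mul_self]

theorem eval_sum_C_sliceProj_mul (hI : I * I = -1) (s : Finset ℕ) (b : ℕ → ℍ) (u : ℍ)
    (w : ℂ) :
    (∑ e ∈ s, C (sliceProj I (b e * u)) * X ^ e).eval w =
      sliceProj I ((∑ e ∈ s, Complex.liftAux I hI w ^ e * b e) * u) := by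
  rw [eval_finsetSum, sum_mul, map_sum]
  refine sum_congr rfl fun e _ => ?_
  rw [eval_mul, eval_C, eval_pow, eval_X, mul_assoc, ← map_pow, sliceProj_liftAux_mul, mul_comm]

theorem sliceProj_derivCoeff_mul (hI : I * I = -1) (b : ℕ → ℍ) (u : ℍ) (e : ℕ) :
    sliceProj I (derivCoeff b e * u) = derivCoeff (fun e => sliceProj I (b e * u)) e := by
  rw [derivCoeff, derivCoeff, mul_assoc, ← map_natCast (Complex.liftAux I hI),
    sliceProj_liftAux_mul]

theorem norm_sum_derivCoeff_le (b : ℕ → ℍ) (m : ℕ) {r M : ℝ} (hr : 0 < r)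
    (hM : ∀ q : ℍ, ‖q‖ = r → ‖∑ e ∈ range (m + 1), q ^ e * b e‖ ≤ M) {q₀ : ℍ}
    (hq₀ : ‖q₀‖ = r) :
    ‖∑ e ∈ range m, q₀ ^ e * derivCoeff b e‖ ≤ m * M / r := by
  obtain ⟨I, hI, w₀, rfl⟩ := exists_liftAux_eq q₀
  set D := ∑ e ∈ range m, Complex.liftAux I hI w₀ ^ e * derivCoeff b e
  set u : ℍ := ‖D‖⁻¹ • star D
  have hDu : D * u = (‖D‖ : ℍ) := by
    rcases eq_or_ne D 0 with hD | hD
    · simp [u, hD]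
    · rw [mul_smul_comm, self_mul_star, normSq_eq_norm_mul_self, ← coe_mul_eq_smul, ← coe_mul,
        inv_mul_cancel_left₀ (norm_ne_zero_iff.mpr hD)]
  have hu : ‖u‖ ≤ 1 := by
    rw [norm_smul, norm_star, norm_inv, norm_norm]
    exact inv_mul_le_one
  set p : ℂ[X] := ∑ e ∈ range (m + 1), C (sliceProj I (b e * u)) * X ^ e
  have hpM : ∀ w : ℂ, ‖w‖ = r → ‖p.eval w‖ ≤ M := fun w hw => by
    rw [eval_sum_C_sliceProj_mul hI]
    refine (norm_sliceProj_le hI _).trans ?_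
    rw [norm_mul]
    exact mul_le_of_le_one_right (norm_nonneg _) hu |>.trans (hM _ (by rw [norm_liftAux, hw]))
  have hp' : p.derivative.eval w₀ = ‖D‖ := by
    simp only [p, derivative_sum_range_C_mul_X_pow, ← sliceProj_derivCoeff_mul hI,
      eval_sum_C_sliceProj_mul hI]
    rw [hDu, sliceProj_coe hI]
  have hp : p.natDegree ≤ m := natDegree_sum_le_of_forall_le _ _ fun e he =>
    (natDegree_C_mul_X_pow_le _ e).trans (Nat.lt_succ_iff.mp (mem_range.mp he))
  have := norm_eval_derivative_le hp hr hpM (by rwa [norm_liftAux] at hq₀ : ‖w₀‖ = r)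
  rwa [hp', Complex.norm_real, norm_norm] at this

noncomputable def sphereSup (r : ℝ) (m : ℕ) (b : ℕ → ℍ) : ℝ :=
  sSup {y : ℝ | ∃ q : ℍ, ‖q‖ = r ∧ y = ‖∑ e ∈ range (m + 1), q ^ e * b e‖}

theorem le_sphereSup {r : ℝ} (m : ℕ) (b : ℕ → ℍ) {q : ℍ} (hq : ‖q‖ = r) :
    ‖∑ e ∈ range (m + 1), q ^ e * b e‖ ≤ sphereSup r m b := by
  refine le_csSup ⟨∑ e ∈ range (m + 1), r ^ e * ‖b e‖, ?_⟩ ⟨q, hq, rfl⟩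
  rintro _ ⟨q, rfl, rfl⟩
  exact (norm_sum_le _ _).trans_eq (sum_congr rfl fun e _ => by rw [norm_mul, norm_pow])

theorem sphereSup_derivCoeff_le {r : ℝ} (hr : 0 < r) (m : ℕ) (b : ℕ → ℍ) :
    sphereSup r m (derivCoeff b) ≤ (m + 1) / r * sphereSup r (m + 1) b := by
  refine csSup_le ⟨_, r, by simp [hr.le], rfl⟩ ?_
  rintro _ ⟨q, hq, rfl⟩
  have := norm_sum_derivCoeff_le b (m + 1) hr (fun q hq => le_sphereSup (m + 1) b hq) hq
  rw [mul_div_right_comm] at this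
  exact_mod_cast this

theorem sphereSup_iterate_derivCoeff_le {r : ℝ} (hr : 0 < r) (b : ℕ → ℍ) (k m : ℕ) :
    sphereSup r m (derivCoeff^[k] b) ≤
      (m + k).descFactorial k / r ^ k * sphereSup r (m + k) b := by
  induction k generalizing b with
  | zero => simp
  | succ k ih =>
    rw [Function.iterate_succ_apply]
    refine (ih (derivCoeff b)).trans ?_
    calc _ ≤ (m + k).descFactorial k / r ^ k * ((m + k + 1) / r * sphereSup r (m + k + 1) b) := by
          gcongr
          exact_mod_cast sphereSup_derivCoeff_le hr (m + k) b
      _ = _ := by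
          rw [← add_assoc, Nat.succ_descFactorial_succ, pow_succ]
          push_cast
          ring

end Quaternion

theorem stmt_12_general (n : ℕ) (a : ℕ → ℍ[ℝ])
    (r : ℝ) (hr : 0 < r) (k : ℕ) (hkn : k ≤ n) :
    sSup {y : ℝ | ∃ q : ℍ[ℝ], ‖q‖ = r ∧
        y = ‖∑ j ∈ Finset.range (n + 1),
              (Nat.descFactorial j k : ℍ[ℝ]) * q ^ (j - k) * a j‖}
      ≤ ((Nat.descFactorial n k : ℝ) / r ^ k) *
        sSup {y : ℝ | ∃ q : ℍ[ℝ], ‖q‖ = r ∧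
          y = ‖∑ j ∈ Finset.range (n + 1), q ^ j * a j‖} := by
  have hsum : ∀ q : ℍ, ∑ j ∈ range (n + 1), (j.descFactorial k : ℍ) * q ^ (j - k) * a j =
      ∑ e ∈ range (n - k + 1), q ^ e * derivCoeff^[k] a e := by
    intro q
    rw [show n + 1 = k + (n - k + 1) by omega, sum_range_add,
      sum_eq_zero fun j hj => by rw [Nat.descFactorial_eq_zero_iff_lt.mpr (mem_range.mp hj)]; simp,
      zero_add]
    refine sum_congr rfl fun e _ => ?_
    rw [iterate_derivCoeff_apply, add_comm k e, Nat.add_sub_cancel, ← mul_assoc,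
      (Nat.cast_commute _ _).eq]
  have h := Quaternion.sphereSup_iterate_derivCoeff_le hr a k (n - k)
  rw [Nat.sub_add_cancel hkn] at h
  simpa only [Quaternion.sphereSup, hsum] using h

/-- Iterated Bernstein inequality: for the `k`-th formal derivative
`f^(k)(q) = ∑_j j(j-1)⋯(j-k+1) q^{j-k} a_j` of
`f(q) = ∑_{j=0}^n q^j a_j` (degree `n`, so `a_n ≠ 0`), one has
`max_{‖q‖=r} ‖f^(k)(q)‖ ≤ (n(n-1)⋯(n-k+1)/r^k) max_{‖q‖=r} ‖f(q)‖`. -/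
theorem stmt_12 (n : ℕ) (hn : 1 ≤ n) (a : ℕ → ℍ[ℝ]) (han : a n ≠ 0)
    (r : ℝ) (hr : 0 < r) (k : ℕ) (hk1 : 1 ≤ k) (hkn : k ≤ n) :
    sSup {y : ℝ | ∃ q : ℍ[ℝ], ‖q‖ = r ∧
        y = ‖∑ j ∈ Finset.range (n + 1),
              (Nat.descFactorial j k : ℍ[ℝ]) * q ^ (j - k) * a j‖}
      ≤ ((Nat.descFactorial n k : ℝ) / r ^ k) *
        sSup {y : ℝ | ∃ q : ℍ[ℝ], ‖q‖ = r ∧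
          y = ‖∑ j ∈ Finset.range (n + 1), q ^ j * a j‖} :=
  stmt_12_general n a r hr k hkn
end

section
/- Let f(q) = qⁿ + q^(n-1)·a₁ + ⋯ + q·a_(n-1) + a_n be a monic quaternion polynomial of degree n with quaternion coefficients, let r > 0, and set α_ν = |a_ν|/r^ν for ν = 2, …, n; assume α₂ ≥ α₃ ≥ ⋯ ≥ α_n. Then every zero of f lies in the union of the balls {q ∈ ℍ : |q| ≤ r(1 + α₂)} and {q ∈ ℍ : |q + a₁| ≤ r}. -/
open scoped Quaternion

lemma geo_sum_id (t r : ℝ) : ∀ n, 2 ≤ n →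
    (∑ ν ∈ Finset.Icc 2 n, t ^ (n - ν) * r ^ ν) * (t - r) + r ^ (n + 1)
      = r ^ 2 * t ^ (n - 1) := by
  intro n
  induction n with
  | zero => omega
  | succ m ih =>
    intro h
    rcases Nat.lt_or_ge m 2 with hm | hm
    · interval_cases m
      · omega
      · norm_num [Finset.Icc_self]
        ring
    · have h1 : Finset.Icc 2 (m + 1) = insert (m + 1) (Finset.Icc 2 m) := by
        ext x; simp; omega
      have h2 : ∑ ν ∈ Finset.Icc 2 m, t ^ (m + 1 - ν) * r ^ ν
          = t * ∑ ν ∈ Finset.Icc 2 m, t ^ (m - ν) * r ^ ν := by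
        rw [Finset.mul_sum]
        refine Finset.sum_congr rfl fun ν hν => ?_
        simp only [Finset.mem_Icc] at hν
        have : m + 1 - ν = (m - ν) + 1 := by omega
        rw [this, pow_succ']
        ring
      rw [h1, Finset.sum_insert (by simp), h2]
      have hS := ih hm
      have hm1 : m + 1 - (m + 1) = 0 := by omega
      have hm2 : m + 1 - 1 = m := by omega
      have hm3 : t ^ m = t * t ^ (m - 1) := by
        rw [← pow_succ']; congr 1; omega
      rw [hm1, hm2, hm3]
      linear_combination t * hS

/-- Theorem E: with `α_ν = ‖a_ν‖ / r^ν` ordered `α₂ ≥ α₃ ≥ ⋯ ≥ α_n`, every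
zero of `f(q) = q^n + q^{n-1} a₁ + ⋯ + q a_{n-1} + a_n` lies in
`{‖q‖ ≤ r (1 + α₂)} ∪ {‖q + a₁‖ ≤ r}`. -/
theorem stmt_14 (n : ℕ) (hn : 2 ≤ n) (a : ℕ → ℍ[ℝ]) (r : ℝ) (hr : 0 < r)
    (hord : ∀ ν, 2 ≤ ν → ν < n → ‖a (ν + 1)‖ / r ^ (ν + 1) ≤ ‖a ν‖ / r ^ ν)
    (q : ℍ[ℝ])
    (hq : q ^ n + ∑ ν ∈ Finset.Icc 1 n, q ^ (n - ν) * a ν = 0) :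
    ‖q‖ ≤ r * (1 + ‖a 2‖ / r ^ 2) ∨ ‖q + a 1‖ ≤ r := by
  set α : ℝ := ‖a 2‖ / r ^ 2 with hα
  rcases le_or_gt ‖q‖ (r * (1 + α)) with hle | hlt
  · exact Or.inl hle
  right
  set t : ℝ := ‖q‖ with ht
  have hα0 : 0 ≤ α := div_nonneg (norm_nonneg _) (by positivity)
  have htr : r < t := by nlinarith
  have ht0 : 0 < t := lt_trans hr htr
  -- decompose the sum
  have hsplit : Finset.Icc 1 n = insert 1 (Finset.Icc 2 n) := by
    ext x; simp; omega
  rw [hsplit, Finset.sum_insert (by simp)] at hq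
  have hkey : q ^ (n - 1) * (q + a 1)
      = -∑ ν ∈ Finset.Icc 2 n, q ^ (n - ν) * a ν := by
    have hpow : q ^ (n - 1) * q = q ^ n := by
      rw [← pow_succ]; congr 1; omega
    rw [mul_add, hpow]
    rw [← add_assoc] at hq
    exact eq_neg_of_add_eq_zero_left hq
  -- chain: α_ν ≤ α for 2 ≤ ν ≤ n
  have chain : ∀ ν, 2 ≤ ν → ν ≤ n → ‖a ν‖ / r ^ ν ≤ α := by
    intro ν
    induction ν with
    | zero => omega
    | succ m ihm =>
      intro h2 hle
      rcases Nat.lt_or_ge m 2 with hm | hm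
      · have : m + 1 = 2 := by omega
        rw [this]
      · exact le_trans (hord m hm (by omega)) (ihm hm (by omega))
  have hbound : ∀ ν ∈ Finset.Icc 2 n, ‖a ν‖ ≤ α * r ^ ν := by
    intro ν hν
    simp only [Finset.mem_Icc] at hν
    have := chain ν hν.1 hν.2
    have hrν : (0:ℝ) < r ^ ν := by positivity
    rw [div_le_iff₀ hrν] at this
    linarith
  -- norm inequality
  have hnorm : t ^ (n - 1) * ‖q + a 1‖
      ≤ ∑ ν ∈ Finset.Icc 2 n, t ^ (n - ν) * ‖a ν‖ := by
    calc t ^ (n - 1) * ‖q + a 1‖ = ‖q ^ (n - 1) * (q + a 1)‖ := by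
          rw [norm_mul, norm_pow]
      _ = ‖∑ ν ∈ Finset.Icc 2 n, q ^ (n - ν) * a ν‖ := by rw [hkey, norm_neg]
      _ ≤ ∑ ν ∈ Finset.Icc 2 n, ‖q ^ (n - ν) * a ν‖ := norm_sum_le _ _
      _ = ∑ ν ∈ Finset.Icc 2 n, t ^ (n - ν) * ‖a ν‖ := by
          refine Finset.sum_congr rfl fun ν hν => ?_
          rw [norm_mul, norm_pow]
  have hsum2 : ∑ ν ∈ Finset.Icc 2 n, t ^ (n - ν) * ‖a ν‖
      ≤ α * ∑ ν ∈ Finset.Icc 2 n, t ^ (n - ν) * r ^ ν := by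
    rw [Finset.mul_sum]
    refine Finset.sum_le_sum fun ν hν => ?_
    have h1 := hbound ν hν
    have h2 : (0:ℝ) ≤ t ^ (n - ν) := by positivity
    nlinarith
  set S : ℝ := ∑ ν ∈ Finset.Icc 2 n, t ^ (n - ν) * r ^ ν with hS
  have hgeo := geo_sum_id t r n hn
  have hrn : (0:ℝ) < r ^ (n + 1) := by positivity
  have hSle : S * (t - r) ≤ r ^ 2 * t ^ (n - 1) := by nlinarith
  -- α * r^2 ≤ r * (t - r)
  have hαr : α * r ^ 2 ≤ r * (t - r) := by nlinarith
  have htn : (0:ℝ) < t ^ (n - 1) := by positivity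
  have hfinal : t ^ (n - 1) * ‖q + a 1‖ ≤ t ^ (n - 1) * r := by
    have h3 : t ^ (n - 1) * ‖q + a 1‖ ≤ α * S := le_trans hnorm hsum2
    have h4 : (α * S) * (t - r) ≤ α * (r ^ 2 * t ^ (n - 1)) := by nlinarith
    have h5 : α * (r ^ 2 * t ^ (n - 1)) ≤ r * (t - r) * t ^ (n - 1) := by nlinarith
    have htr' : 0 < t - r := by linarith
    nlinarith
  exact le_of_mul_le_mul_left (by linarith [hfinal]) htn
end

section
/- Let f(q) = qⁿ + q^p·a_p + ⋯ + q·a₁ + a₀ with 0 ≤ p ≤ n−1 be a monic quaternion polynomial and r > 0 a real number. Then every zero q of f satisfies |q| ≤ max{ r, Σ_{k=1}^{n} |a_(n−k)| / r^(k−1) } (where a_j = 0 for j > p). -/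
open scoped Quaternion

/-! Since `q` is a root, `‖q‖ⁿ ≤ ∑_{ν<n} ‖a_ν‖ ‖q‖^ν`. If `‖q‖ > r`, then `‖q‖^ν ≤ ‖q‖ⁿ⁻¹ / r^(n-1-ν)`
for every `ν < n`, and dividing by `‖q‖ⁿ⁻¹` gives `‖q‖ ≤ ∑_{ν<n} ‖a_ν‖ / r^(n-1-ν)`, which is the
stated sum read backwards. -/

open Finset

theorem norm_pow_le_sum_of_pow_add_sum_eq_zero {R : Type*} [NormedDivisionRing R]
    {n m : ℕ} (hmn : m ≤ n) {a : ℕ → R} {q : R}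
    (hq : q ^ n + ∑ ν ∈ range m, q ^ ν * a ν = 0) :
    ‖q‖ ^ n ≤ ∑ ν ∈ range n, ‖a ν‖ * ‖q‖ ^ ν :=
  calc ‖q‖ ^ n = ‖∑ ν ∈ range m, q ^ ν * a ν‖ := by
        rw [← norm_pow, eq_neg_of_add_eq_zero_left hq, norm_neg]
    _ ≤ ∑ ν ∈ range m, ‖a ν‖ * ‖q‖ ^ ν := by
        simpa only [norm_mul, norm_pow, mul_comm] using norm_sum_le (range m) fun ν => q ^ ν * a ν
    _ ≤ ∑ ν ∈ range n, ‖a ν‖ * ‖q‖ ^ ν :=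
        sum_le_sum_of_subset_of_nonneg (range_subset_range.mpr hmn) fun _ _ _ => by positivity

theorem le_max_of_pow_le_sum_mul_pow {n : ℕ} {c : ℕ → ℝ} (hc : ∀ ν, 0 ≤ c ν) {r x : ℝ}
    (hr : 0 < r) (hx : x ^ n ≤ ∑ ν ∈ range n, c ν * x ^ ν) :
    x ≤ max r (∑ ν ∈ range n, c ν / r ^ (n - 1 - ν)) := by
  rcases le_or_gt x r with hxr | hrx
  · exact le_max_of_le_left hxr
  refine le_max_of_le_right ?_
  have hx0 : 0 < x := hr.trans hrx
  obtain _ | n := n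
  · norm_num at hx
  have hterm : ∀ ν ∈ range (n + 1), c ν * x ^ ν ≤ c ν / r ^ (n - ν) * x ^ n := by
    intro ν hν
    have hνn : ν ≤ n := Nat.lt_succ_iff.mp (mem_range.mp hν)
    rw [div_mul_eq_mul_div, le_div_iff₀ (by positivity), mul_assoc, ← Nat.sub_add_cancel hνn,
      pow_add, Nat.add_sub_cancel, mul_comm (x ^ _)]
    gcongr
    exact hc ν
  have hsum : x * x ^ n ≤ (∑ ν ∈ range (n + 1), c ν / r ^ (n - ν)) * x ^ n := by
    rw [sum_mul, ← pow_succ']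
    exact hx.trans (sum_le_sum hterm)
  simpa using le_of_mul_le_mul_right hsum (by positivity)

theorem sum_Icc_one_eq_sum_range_reflect {M : Type*} [AddCommMonoid M] (n : ℕ) (f : ℕ → ℕ → M) :
    ∑ k ∈ Icc 1 n, f (n - k) (k - 1) = ∑ ν ∈ range n, f ν (n - 1 - ν) := by
  refine sum_nbij' (n - ·) (n - ·) ?_ ?_ ?_ ?_ ?_ <;> intro i hi <;>
    simp only [mem_Icc, mem_range] at hi ⊢
  all_goals first | omega | (congr 1; omega)

theorem stmt_15_general (n p : ℕ) (hpn : p < n) (a : ℕ → ℍ[ℝ])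
    (r : ℝ) (hr : 0 < r)
    (q : ℍ[ℝ]) (hq : q ^ n + ∑ ν ∈ Finset.range (p + 1), q ^ ν * a ν = 0) :
    ‖q‖ ≤ max r (∑ k ∈ Finset.Icc 1 n, ‖a (n - k)‖ / r ^ (k - 1)) := by
  rw [sum_Icc_one_eq_sum_range_reflect n fun ν k => ‖a ν‖ / r ^ k]
  exact le_max_of_pow_le_sum_mul_pow (fun _ => norm_nonneg _) hr
    (norm_pow_le_sum_of_pow_add_sum_eq_zero hpn hq)

/-- Intermediate Geršgorin-type bound: for any `r > 0`, every zero of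
`f(q) = q^n + q^p a_p + ⋯ + a₀` (with `a_j = 0` for `j > p`) satisfies
`‖q‖ ≤ max { r, ∑_{k=1}^n ‖a_{n-k}‖ / r^(k-1) }`. -/
theorem stmt_15 (n p : ℕ) (hpn : p < n) (a : ℕ → ℍ[ℝ])
    (ha0 : ∀ j, p < j → a j = 0) (r : ℝ) (hr : 0 < r)
    (q : ℍ[ℝ]) (hq : q ^ n + ∑ ν ∈ Finset.range (p + 1), q ^ ν * a ν = 0) :
    ‖q‖ ≤ max r (∑ k ∈ Finset.Icc 1 n, ‖a (n - k)‖ / r ^ (k - 1)) :=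
  stmt_15_general n p hpn a r hr q hq
end
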